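/- arXiv:1410.8614 — 7 statements merged into one kernel-verified Lean document; each statement's English description precedes it below -/
import Mathlib

section
/- Let q be an integer with |q| > 1, d ≥ 1, and let A be a finite subset of Z^d of rank d that is reduced, i.e., for every a ∈ A the set A - a generates Z^d as a group. Then A intersects at least d + 1 distinct cosets of the lattice q·Z^d. -/
open Pointwise

/-- The rank of a finite `A ⊆ ℤ^d`: the smallest dimension of an affine
subspace containing `A`, i.e. the dimension of the `ℚ`-vector span of `A - A`. -/
noncomputable def rk {d : ℕ} (A : Finset (Fin d → ℤ)) : ℕ :=
  Module.finrank ℚ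
    (vectorSpan ℚ ((fun v : Fin d → ℤ => fun i : Fin d => (v i : ℚ)) '' (A : Set (Fin d → ℤ))))

/-- `A` is reduced: for every `a ∈ A`, the differences `A - a` generate `ℤ^d`. -/
def Reduced {d : ℕ} (A : Finset (Fin d → ℤ)) : Prop :=
  ∀ a ∈ A, AddSubgroup.closure ((fun x => x - a) '' (A : Set (Fin d → ℤ))) = ⊤

/-- The number of cosets of the lattice `q · ℤ^d` that `A` intersects. -/
def numCosets {d : ℕ} (q : ℤ) (A : Finset (Fin d → ℤ)) : ℕ :=
  (A.image (fun a => fun i => ((a i : ZMod q.natAbs)))).card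

lemma rk_empty {d : ℕ} : rk (∅ : Finset (Fin d → ℤ)) = 0 := by
  rw [rk]
  simp only [Submodule.finrank_eq_zero, Finset.coe_empty, Set.image_empty, vectorSpan_empty]

theorem reduced_many_cosets {d : ℕ} (hd : 1 ≤ d) (q : ℤ) (hq : 1 < |q|)
    (A : Finset (Fin d → ℤ)) (hrk : rk A = d) (hred : Reduced A) :
    d + 1 ≤ numCosets q A := by
  -- A is nonempty
  have hA : A.Nonempty := by
    by_contra h
    rw [Finset.not_nonempty_iff_eq_empty] at h
    subst h
    rw [rk_empty] at hrk
    omega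
  obtain ⟨a, ha⟩ := hA
  have hn1 : q.natAbs ≠ 1 := by
    have : (1 : ℤ) < q.natAbs := by rwa [Int.abs_eq_natAbs] at hq
    omega
  obtain ⟨p, hp, hpn⟩ := Nat.exists_prime_and_dvd hn1
  haveI : Fact p.Prime := ⟨hp⟩
  -- componentwise reduction maps
  let gr : (Fin d → ℤ) →+* (Fin d → ZMod p) :=
    Pi.ringHom fun i => (Int.castRingHom (ZMod p)).comp (Pi.evalRingHom (fun _ => ℤ) i)
  let g : (Fin d → ℤ) →+ (Fin d → ZMod p) := gr.toAddMonoidHom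
  have hgsurj : Function.Surjective g := by
    intro w
    refine ⟨fun i => (ZMod.intCast_surjective (w i)).choose, funext fun i => ?_⟩
    exact (ZMod.intCast_surjective (w i)).choose_spec
  -- the difference set mod p
  let T : Finset (Fin d → ZMod p) := A.image (fun x => g x - g a)
  have hTclos : AddSubgroup.closure (T : Set (Fin d → ZMod p)) = ⊤ := by
    have h1 := hred a ha
    have h2 : (AddSubgroup.closure ((fun x => x - a) '' (A : Set (Fin d → ℤ)))).map g = ⊤ := by
      rw [h1, ← AddMonoidHom.range_eq_map, AddMonoidHom.range_eq_top]
      exact hgsurj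
    rw [AddMonoidHom.map_closure] at h2
    rw [← h2]
    congr 1
    rw [Finset.coe_image, ← Set.image_comp]
    apply Set.image_congr
    intro x _
    simp [g, map_sub]
  -- span over ZMod p is everything
  have hspan : Submodule.span (ZMod p) (T : Set (Fin d → ZMod p)) = ⊤ := by
    rw [Submodule.eq_top_iff']
    intro x
    have : x ∈ AddSubgroup.closure (T : Set (Fin d → ZMod p)) := by rw [hTclos]; trivial
    refine AddSubgroup.closure_le
      (G := Fin d → ZMod p)
      ((Submodule.span (ZMod p) (T : Set (Fin d → ZMod p))).toAddSubgroup) |>.2 ?_ this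
    exact Submodule.subset_span
  -- 0 ∈ T
  have h0T : (0 : Fin d → ZMod p) ∈ T := by
    apply Finset.mem_image.2 ⟨a, ha, by simp⟩
  -- card of T bounded by numCosets
  have hTcard : T.card ≤ numCosets q A := by
    -- g factors through reduction mod q.natAbs
    let c : (Fin d → ZMod q.natAbs) → (Fin d → ZMod p) :=
      fun w i => ZMod.castHom hpn (ZMod p) (w i)
    have hfac : ∀ x : Fin d → ℤ, g x = c (fun i => ((x i : ZMod q.natAbs))) := by
      intro x
      funext i
      show ((x i : ℤ) : ZMod p) = ZMod.castHom hpn (ZMod p) ((x i : ℤ) : ZMod q.natAbs)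
      rw [map_intCast]
    have : T = (A.image (fun x => fun i => ((x i : ZMod q.natAbs)))).image
        (fun w => c w - c (fun i => ((a i : ZMod q.natAbs)))) := by
      rw [Finset.image_image]
      apply Finset.image_congr
      intro x _
      simp only [Function.comp]
      rw [hfac x, hfac a]
    rw [this, numCosets]
    exact Finset.card_image_le
  -- finrank bound
  have hrank : d ≤ (T.erase 0).card := by
    have hT' : (T : Set (Fin d → ZMod p)) = insert 0 ((T.erase 0 : Finset _) : Set _) := by
      rw [← Finset.coe_insert, Finset.insert_erase h0T]
    have hspan' : Submodule.span (ZMod p) ((T.erase 0 : Finset _) : Set (Fin d → ZMod p)) = ⊤ := by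
      rw [← Submodule.span_insert_zero, ← hT', hspan]
    have h1 : Module.finrank (ZMod p)
        (Submodule.span (ZMod p) ((T.erase 0 : Finset _) : Set (Fin d → ZMod p))) ≤
        (T.erase 0).card := finrank_span_finset_le_card _
    rw [hspan'] at h1
    rw [finrank_top] at h1
    have h2 : Module.finrank (ZMod p) (Fin d → ZMod p) = d := by
      rw [Module.finrank_pi, Fintype.card_fin]
    omega
  have := Finset.card_erase_of_mem h0T
  have hTpos : 1 ≤ T.card := Finset.card_pos.2 ⟨0, h0T⟩
  omega
end

section
/- Let d ≥ 2, N ≥ d+1 be integers, q > 1 an integer, and let A_N = {e_1, ..., e_d} ∪ {n·e_1 : 0 < n < N, n ∈ Z} ⊆ Z^d, where e_i are the standard basis vectors. Then |A_N + q·A_N| ≤ (q + 2d - 1)|A_N| - (d-1)(q - 2(d-1) + 1). -/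
open Pointwise

/-- The dilate `q · A = {q • a : a ∈ A}`. -/
def dil {d : ℕ} (q : ℤ) (A : Finset (Fin d → ℤ)) : Finset (Fin d → ℤ) :=
  A.image (fun a => q • a)

theorem construction_upper_bound {d : ℕ} (hd : 2 ≤ d) (N q : ℤ)
    (hN : (d : ℤ) + 1 ≤ N) (hq : 1 < q) (A : Finset (Fin d → ℤ))
    (hA : A = (Finset.univ.image (fun i : Fin d => (Pi.single i 1 : Fin d → ℤ))) ∪
        ((Finset.Ioo (0 : ℤ) N).image
          (fun n => n • (Pi.single (⟨0, by omega⟩ : Fin d) 1 : Fin d → ℤ)))) :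
    ((A + dil q A).card : ℤ) ≤ (q + 2 * d - 1) * A.card - (d - 1) * (q - 2 * (d - 1) + 1) := by
  have hd0 : 0 < d := by omega
  set i0 : Fin d := ⟨0, hd0⟩ with hi0
  set e : Fin d → ℤ := Pi.single i0 1 with he
  have hD : (2:ℤ) ≤ (d:ℤ) := by exact_mod_cast hd
  have hN3 : (3:ℤ) ≤ N := by omega
  have hq2 : (2:ℤ) ≤ q := by omega
  -- membership in A
  have hmemA : ∀ x, x ∈ A ↔ (∃ i : Fin d, Pi.single i 1 = x) ∨
      (∃ n : ℤ, (0 < n ∧ n < N) ∧ n • e = x) := by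
    intro x
    rw [hA]
    simp [Finset.mem_union, Finset.mem_image, Finset.mem_Ioo]
  -- basic evaluation facts
  have hsmul_e : ∀ (n : ℤ), (n • e) i0 = n := by
    intro n; simp [he, Pi.single_eq_same]
  have hsing_inj : Function.Injective (fun i : Fin d => (Pi.single i 1 : Fin d → ℤ)) := by
    intro i j h
    by_contra hne
    have := congrFun h i
    simp only [] at this
    rw [Pi.single_eq_same, Pi.single_eq_of_ne hne] at this
    exact one_ne_zero this
  have hsmul_inj : Function.Injective (fun n : ℤ => n • e) := by
    intro n m h
    have := congrFun h i0
    simpa [he, Pi.single_eq_same] using this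
  -- the covering sets
  set B1 : Finset (Fin d → ℤ) := (Finset.Icc (q+1) ((q+1)*(N-1))).image (fun n => n • e) with hB1
  set B2 : Finset (Fin d → ℤ) := ((Finset.Ioo (0:ℤ) N) ×ˢ (Finset.univ.erase i0)).image
      (fun p => p.1 • e + q • (Pi.single p.2 1 : Fin d → ℤ)) with hB2
  set B3 : Finset (Fin d → ℤ) := ((Finset.Ioo (0:ℤ) N) ×ˢ (Finset.univ.erase i0)).image
      (fun p => (Pi.single p.2 1 : Fin d → ℤ) + (q * p.1) • e) with hB3
  set B4 : Finset (Fin d → ℤ) := ((Finset.univ.erase i0) ×ˢ (Finset.univ.erase i0)).image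
      (fun p : Fin d × Fin d => (Pi.single p.1 1 : Fin d → ℤ) + q • (Pi.single p.2 1 : Fin d → ℤ)) with hB4
  -- helper to place things in B1
  have hmemB1 : ∀ (n : ℤ), q + 1 ≤ n → n ≤ (q+1)*(N-1) → n • e ∈ B1 := by
    intro n h1 h2
    rw [hB1, Finset.mem_image]
    exact ⟨n, Finset.mem_Icc.2 ⟨h1, h2⟩, rfl⟩
  -- subset claim
  have hsub : A + dil q A ⊆ B1 ∪ B2 ∪ B3 ∪ B4 := by
    intro x hx
    rw [Finset.mem_add] at hx
    obtain ⟨a, ha, c, hc, hac⟩ := hx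
    rw [dil, Finset.mem_image] at hc
    obtain ⟨b, hb, rfl⟩ := hc
    rw [hmemA] at ha hb
    simp only [Finset.mem_union]
    rcases ha with ⟨i, rfl⟩ | ⟨n, ⟨hn0, hnN⟩, rfl⟩ <;>
      rcases hb with ⟨j, rfl⟩ | ⟨m, ⟨hm0, hmN⟩, rfl⟩
    · -- basis + basis
      by_cases hj : j = i0
      · subst hj
        by_cases hi : i = i0
        · subst hi
          left; left; left
          rw [← hac]
          have : (Pi.single i0 1 : Fin d → ℤ) + q • (Pi.single i0 1 : Fin d → ℤ) = (1 + q) • e := by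
            rw [add_smul, one_smul, he]
          rw [this]
          exact hmemB1 _ (by omega) (by nlinarith)
        · -- e_i + q • e, i ≠ i0 : B3 with (1, i)
          left; right
          rw [hB3, Finset.mem_image]
          refine ⟨(1, i), ?_, ?_⟩
          · simp [Finset.mem_product, Finset.mem_Ioo, hi]
            omega
          · rw [← hac]
            simp [he, smul_smul]
      · by_cases hi : i = i0
        · subst hi
          -- e + q • e_j : B2 with (1, j)
          left; left; right
          rw [hB2, Finset.mem_image]
          refine ⟨(1, j), ?_, ?_⟩
          · simp [Finset.mem_product, Finset.mem_Ioo, hj]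
            omega
          · rw [← hac]; simp [he]
        · right
          rw [hB4, Finset.mem_image]
          exact ⟨(i, j), by simp [Finset.mem_product, hi, hj], hac⟩
    · -- basis + line
      by_cases hi : i = i0
      · subst hi
        left; left; left
        rw [← hac]
        have : (Pi.single i0 1 : Fin d → ℤ) + q • (m • e) = (1 + q * m) • e := by
          rw [smul_smul, add_smul, one_smul, he]
        rw [this]
        exact hmemB1 _ (by nlinarith) (by nlinarith)
      · left; right
        rw [hB3, Finset.mem_image]
        refine ⟨(m, i), ?_, ?_⟩
        · simp [Finset.mem_product, Finset.mem_Ioo, hi, hm0, hmN]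
        · rw [← hac]; rw [smul_smul]
    · -- line + basis
      by_cases hj : j = i0
      · subst hj
        left; left; left
        rw [← hac]
        have : n • e + q • (Pi.single i0 1 : Fin d → ℤ) = (n + q) • e := by
          rw [add_smul, he]
        rw [this]
        exact hmemB1 _ (by omega) (by nlinarith)
      · left; left; right
        rw [hB2, Finset.mem_image]
        exact ⟨(n, j), by simp [Finset.mem_product, Finset.mem_Ioo, hj, hn0, hnN], hac⟩
    · -- line + line
      left; left; left
      rw [← hac]
      have : n • e + q • (m • e) = (n + q * m) • e := by
        rw [smul_smul, add_smul]
      rw [this]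
      exact hmemB1 _ (by nlinarith) (by nlinarith)
  -- cardinality bounds
  have hcB1 : ((B1.card : ℤ)) ≤ (q+1)*(N-1) - q := by
    calc ((B1.card : ℤ)) ≤ ((Finset.Icc (q+1) ((q+1)*(N-1))).card : ℤ) := by
          exact_mod_cast Finset.card_image_le
    _ = (q+1)*(N-1) - q := by
          rw [Int.card_Icc]
          rw [Int.toNat_of_nonneg (by nlinarith)]
          ring
  have hcIoo : ((Finset.Ioo (0:ℤ) N).card : ℤ) = N - 1 := by
    rw [Int.card_Ioo]
    rw [Int.toNat_of_nonneg (by omega)]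
    ring
  have hcerase : ((Finset.univ.erase i0).card : ℤ) = (d:ℤ) - 1 := by
    rw [Finset.card_erase_of_mem (Finset.mem_univ _), Finset.card_univ, Fintype.card_fin]
    push_cast [Nat.cast_sub hd0]
    ring
  have hcB2 : ((B2.card : ℤ)) ≤ (N-1) * ((d:ℤ)-1) := by
    calc ((B2.card : ℤ)) ≤ (((Finset.Ioo (0:ℤ) N) ×ˢ (Finset.univ.erase i0)).card : ℤ) := by
          exact_mod_cast Finset.card_image_le
    _ = (N-1) * ((d:ℤ)-1) := by
          rw [Finset.card_product]; push_cast [hcIoo, hcerase]; ring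
  have hcB3 : ((B3.card : ℤ)) ≤ (N-1) * ((d:ℤ)-1) := by
    calc ((B3.card : ℤ)) ≤ (((Finset.Ioo (0:ℤ) N) ×ˢ (Finset.univ.erase i0)).card : ℤ) := by
          exact_mod_cast Finset.card_image_le
    _ = (N-1) * ((d:ℤ)-1) := by
          rw [Finset.card_product]; push_cast [hcIoo, hcerase]; ring
  have hcB4 : ((B4.card : ℤ)) ≤ ((d:ℤ)-1) * ((d:ℤ)-1) := by
    calc ((B4.card : ℤ)) ≤ (((Finset.univ.erase i0) ×ˢ (Finset.univ.erase i0)).card : ℤ) := by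
          exact_mod_cast Finset.card_image_le
    _ = ((d:ℤ)-1) * ((d:ℤ)-1) := by
          rw [Finset.card_product]; push_cast [hcerase]; ring
  -- upper bound on the sumset
  have hup : (((A + dil q A).card : ℤ)) ≤ ((q+1)*(N-1) - q) + (N-1)*((d:ℤ)-1)
      + (N-1)*((d:ℤ)-1) + ((d:ℤ)-1)*((d:ℤ)-1) := by
    have h1 : (A + dil q A).card ≤ (B1 ∪ B2 ∪ B3 ∪ B4).card := Finset.card_le_card hsub
    have h2 : (B1 ∪ B2 ∪ B3 ∪ B4).card ≤ B1.card + B2.card + B3.card + B4.card := by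
      calc (B1 ∪ B2 ∪ B3 ∪ B4).card ≤ (B1 ∪ B2 ∪ B3).card + B4.card := Finset.card_union_le _ _
      _ ≤ (B1 ∪ B2).card + B3.card + B4.card := by
            have := Finset.card_union_le (B1 ∪ B2) B3; omega
      _ ≤ B1.card + B2.card + B3.card + B4.card := by
            have := Finset.card_union_le B1 B2; omega
    have : (((A + dil q A).card : ℤ)) ≤ (B1.card : ℤ) + B2.card + B3.card + B4.card := by
      exact_mod_cast le_trans h1 h2
    linarith
  -- lower bound on |A|
  have hlow : (N - 1) + ((d:ℤ) - 1) ≤ (A.card : ℤ) := by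
    set A1 : Finset (Fin d → ℤ) := (Finset.univ.erase i0).image
        (fun i => (Pi.single i 1 : Fin d → ℤ)) with hA1
    set A2 : Finset (Fin d → ℤ) := (Finset.Ioo (0:ℤ) N).image (fun n => n • e) with hA2
    have hsubA : A1 ∪ A2 ⊆ A := by
      intro x hx
      rw [Finset.mem_union] at hx
      rw [hmemA]
      rcases hx with hx | hx
      · rw [hA1, Finset.mem_image] at hx
        obtain ⟨i, _, rfl⟩ := hx
        exact Or.inl ⟨i, rfl⟩
      · rw [hA2, Finset.mem_image] at hx
        obtain ⟨n, hn, rfl⟩ := hx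
        rw [Finset.mem_Ioo] at hn
        exact Or.inr ⟨n, hn, rfl⟩
    have hdisj : Disjoint A1 A2 := by
      rw [Finset.disjoint_left]
      intro x hx1 hx2
      rw [hA1, Finset.mem_image] at hx1
      rw [hA2, Finset.mem_image] at hx2
      obtain ⟨i, hi, rfl⟩ := hx1
      obtain ⟨n, hn, hne⟩ := hx2
      rw [Finset.mem_erase] at hi
      rw [Finset.mem_Ioo] at hn
      have := congrFun hne i0
      rw [hsmul_e] at this
      rw [Pi.single_eq_of_ne (Ne.symm hi.1)] at this
      omega
    have hc1 : (A1.card : ℤ) = (d:ℤ) - 1 := by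
      rw [hA1, Finset.card_image_of_injective _ hsing_inj, hcerase]
    have hc2 : (A2.card : ℤ) = N - 1 := by
      rw [hA2, Finset.card_image_of_injective _ hsmul_inj, hcIoo]
    have := Finset.card_le_card hsubA
    rw [Finset.card_union_of_disjoint hdisj] at this
    have : ((A1.card + A2.card : ℕ) : ℤ) ≤ (A.card : ℤ) := by exact_mod_cast this
    push_cast at this
    omega
  -- final arithmetic
  have hcoef : (0:ℤ) < q + 2*(d:ℤ) - 1 := by omega
  nlinarith [hup, hlow, mul_le_mul_of_nonneg_left hlow (le_of_lt hcoef)]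
end

section
/- Let d ≥ 2, N ≥ d+1 be integers, and let A_N = {e_1, ..., e_d} ∪ {n·e_1 : 0 < n < N, n ∈ Z} ⊆ Z^d, where e_i are the standard basis vectors. Then |A_N + 2·A_N| = (2d+1)|A_N| - d(d+1), and likewise |A_N + (-2)·A_N| = (2d+1)|A_N| - d(d+1). -/
open Pointwise

/-!
Write `A = B ∪ L` with `B = {e_i : i ≠ 1}` and `L = {n e_1 : 0 < n < N}`. The additive functional
`σ x = ∑_{i ≠ 1} x_i` is `1` on `B` and `0` on `L`, so for `|q| ≥ 2` it takes the four distinct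
values `1 + q, 1, q, 0` on `B + q·B, B + q·L, L + q·B, L + q·L`, and these blocks are disjoint.
On the first three blocks `(a, b) ↦ a + q b` is injective: `e_i` is recovered from `e_i + q y`
modulo `q`, and `n e_1` from the first coordinate of `n e_1 + q e_j`. The last block lies on the
first axis, where for `q = ±2` it is an interval of `3N - 5` integers. Hence
`|A + q·A| = (d-1)² + 2(d-1)(N-1) + 3N - 5 = (2d+1)|A| - d(d+1)`.
-/

open Finset

section

variable {d : ℕ}

lemma add_dil_eq_image₂ (q : ℤ) (X Y : Finset (Fin d → ℤ)) :
    X + dil q Y = image₂ (fun a b => a + q • b) X Y :=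
  image₂_image_right _ _

lemma card_add_dil_of_injective {q : ℤ} {X Y : Finset (Fin d → ℤ)}
    (h : ∀ a ∈ X, ∀ b ∈ Y, ∀ a' ∈ X, ∀ b' ∈ Y, a + q • b = a' + q • b' → a = a' ∧ b = b') :
    #(X + dil q Y) = #X * #Y := by
  rw [add_dil_eq_image₂, card_image₂_iff]
  rintro ⟨a, b⟩ ⟨ha, hb⟩ ⟨a', b'⟩ ⟨ha', hb'⟩ hab
  obtain ⟨rfl, rfl⟩ := h a ha b hb a' ha' b' hb' hab
  rfl

lemma union_add_dil_union (q : ℤ) (X Y : Finset (Fin d → ℤ)) :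
    (X ∪ Y) + dil q (X ∪ Y) =
      ((X + dil q X) ∪ (Y + dil q X)) ∪ ((X + dil q Y) ∪ (Y + dil q Y)) := by
  simp only [dil, image_union, union_add, add_union]

lemma map_eq_of_mem_add_dil (f : (Fin d → ℤ) →+ ℤ) {q s t : ℤ} {X Y : Finset (Fin d → ℤ)}
    (hX : ∀ x ∈ X, f x = s) (hY : ∀ y ∈ Y, f y = t) : ∀ z ∈ X + dil q Y, f z = s + q * t := by
  intro z hz
  rw [add_dil_eq_image₂] at hz
  obtain ⟨a, ha, b, hb, rfl⟩ := mem_image₂.1 hz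
  rw [map_add, map_zsmul, hX a ha, hY b hb, smul_eq_mul]

lemma disjoint_of_map_ne {α β : Type*} (f : α → β) {s t : Finset α} {a b : β}
    (hs : ∀ x ∈ s, f x = a) (ht : ∀ x ∈ t, f x = b) (hab : a ≠ b) : Disjoint s t :=
  disjoint_left.2 fun x hxs hxt => hab ((hs x hxs).symm.trans (ht x hxt))

lemma card_union_add_dil_union {q : ℤ} (hq : 2 ≤ |q|) (f : (Fin d → ℤ) →+ ℤ)
    {X Y : Finset (Fin d → ℤ)} (hX : ∀ x ∈ X, f x = 1) (hY : ∀ y ∈ Y, f y = 0) :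
    #((X ∪ Y) + dil q (X ∪ Y)) =
      #(X + dil q X) + #(X + dil q Y) + #(Y + dil q X) + #(Y + dil q Y) := by
  have hXX := map_eq_of_mem_add_dil f (q := q) hX hX
  have hXY := map_eq_of_mem_add_dil f (q := q) hX hY
  have hYX := map_eq_of_mem_add_dil f (q := q) hY hX
  have hYY := map_eq_of_mem_add_dil f (q := q) hY hY
  have hq' : q ≠ 0 ∧ q ≠ 1 ∧ q ≠ -1 := by rcases le_abs.1 hq with h | h <;> omega
  rw [union_add_dil_union, card_union_of_disjoint, card_union_of_disjoint, card_union_of_disjoint]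
  · ring
  · exact disjoint_of_map_ne f hXY hYY (by omega)
  · exact disjoint_of_map_ne f hXX hYX (by omega)
  · exact disjoint_union_left.2
      ⟨disjoint_union_right.2 ⟨disjoint_of_map_ne f hXX hXY (by omega),
        disjoint_of_map_ne f hXX hYY (by omega)⟩,
       disjoint_union_right.2 ⟨disjoint_of_map_ne f hYX hXY (by omega),
        disjoint_of_map_ne f hYX hYY (by omega)⟩⟩

lemma single_one_add_smul_inj {q : ℤ} (hq : 2 ≤ |q|) {i k : Fin d} {y y' : Fin d → ℤ} :
    Pi.single i 1 + q • y = Pi.single k 1 + q • y' ↔ i = k ∧ y = y' := by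
  refine ⟨fun h => ?_, by rintro ⟨rfl, rfl⟩; rfl⟩
  have hik : i = k := by
    by_contra hik
    have hi := congrFun h i
    simp only [Pi.add_apply, Pi.single_eq_same, Pi.single_eq_of_ne hik, Pi.smul_apply,
      smul_eq_mul] at hi
    rcases Int.eq_one_or_neg_one_of_mul_eq_one (show q * (y' i - y i) = 1 by linarith)
      with rfl | rfl <;> norm_num at hq
  subst hik
  exact ⟨rfl, smul_right_injective _ (by rintro rfl; norm_num at hq) (add_left_cancel h)⟩

lemma single_add_smul_inj {q : ℤ} (hq : q ≠ 0) {i₀ : Fin d} {m m' : ℤ} {y y' : Fin d → ℤ}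
    (hy : y i₀ = 0) (hy' : y' i₀ = 0) :
    Pi.single i₀ m + q • y = Pi.single i₀ m' + q • y' ↔ m = m' ∧ y = y' := by
  refine ⟨fun h => ?_, by rintro ⟨rfl, rfl⟩; rfl⟩
  have hm : m = m' := by simpa [hy, hy'] using congrFun h i₀
  subst hm
  exact ⟨rfl, smul_right_injective _ hq (add_left_cancel h)⟩

def basisSet (s : Finset (Fin d)) : Finset (Fin d → ℤ) :=
  s.image fun i => Pi.single i 1

def axisSet (i₀ : Fin d) (P : Finset ℤ) : Finset (Fin d → ℤ) :=
  P.image (Pi.single i₀)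

def offAxisSum (i₀ : Fin d) : (Fin d → ℤ) →+ ℤ :=
  ∑ i ∈ univ.erase i₀, Pi.evalAddMonoidHom (fun _ => ℤ) i

lemma offAxisSum_of_mem_basisSet {i₀ : Fin d} {s : Finset (Fin d)} (hs : i₀ ∉ s) :
    ∀ x ∈ basisSet s, offAxisSum i₀ x = 1 := by
  simp only [basisSet, forall_mem_image]
  intro i hi
  simp [offAxisSum, Pi.single_apply, ne_of_mem_of_not_mem hi hs]

lemma offAxisSum_of_mem_axisSet (i₀ : Fin d) (P : Finset ℤ) :
    ∀ x ∈ axisSet i₀ P, offAxisSum i₀ x = 0 := by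
  simp only [axisSet, forall_mem_image]
  intro m _
  simp [offAxisSum, Pi.single_apply]

lemma disjoint_basisSet_axisSet {i₀ : Fin d} {s : Finset (Fin d)} (hs : i₀ ∉ s) (P : Finset ℤ) :
    Disjoint (basisSet s) (axisSet i₀ P) :=
  disjoint_of_map_ne _ (offAxisSum_of_mem_basisSet hs) (offAxisSum_of_mem_axisSet i₀ P) one_ne_zero

lemma basisSet_univ_union_axisSet {i₀ : Fin d} {P : Finset ℤ} (hP : 1 ∈ P) :
    basisSet (univ : Finset (Fin d)) ∪ axisSet i₀ P = basisSet (univ.erase i₀) ∪ axisSet i₀ P := by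
  conv_lhs => rw [basisSet, ← insert_erase (mem_univ i₀), image_insert, insert_union]
  exact insert_eq_of_mem (mem_union_right _ (mem_image_of_mem (Pi.single i₀) hP))

lemma card_basisSet (s : Finset (Fin d)) : #(basisSet s) = #s :=
  card_image_of_injective _ fun i j h => by
    by_contra hij
    simpa [Pi.single_apply, hij] using congrFun h i

lemma card_axisSet (i₀ : Fin d) (P : Finset ℤ) : #(axisSet i₀ P) = #P :=
  card_image_of_injective _ (Pi.single_injective i₀)

lemma card_basisSet_add_dil {q : ℤ} (hq : 2 ≤ |q|) (s : Finset (Fin d))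
    (Y : Finset (Fin d → ℤ)) : #(basisSet s + dil q Y) = #s * #Y := by
  rw [card_add_dil_of_injective, card_basisSet]
  simp only [basisSet, forall_mem_image]
  intro i _ b _ k _ b' _ h
  obtain ⟨rfl, rfl⟩ := (single_one_add_smul_inj hq).1 h
  exact ⟨rfl, rfl⟩

lemma card_axisSet_add_dil {q : ℤ} (hq : q ≠ 0) (i₀ : Fin d) (P : Finset ℤ)
    {Y : Finset (Fin d → ℤ)} (hY : ∀ y ∈ Y, y i₀ = 0) : #(axisSet i₀ P + dil q Y) = #P * #Y := by
  rw [card_add_dil_of_injective, card_axisSet]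
  simp only [axisSet, forall_mem_image]
  intro m _ b hb m' _ b' hb' h
  obtain ⟨rfl, rfl⟩ := (single_add_smul_inj hq (hY b hb) (hY b' hb')).1 h
  exact ⟨rfl, rfl⟩

lemma axisSet_add_dil_axisSet (q : ℤ) (i₀ : Fin d) (P : Finset ℤ) :
    axisSet i₀ P + dil q (axisSet i₀ P) = axisSet i₀ (image₂ (fun m n => m + q * n) P P) := by
  rw [add_dil_eq_image₂, axisSet, image₂_image_left, image₂_image_right, axisSet, image_image₂]
  congr 1
  funext m n
  rw [← Pi.single_smul', ← Pi.single_add, smul_eq_mul]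

lemma card_basisSet_union_axisSet_add_dil {q : ℤ} (hq : 2 ≤ |q|) {i₀ : Fin d}
    {s : Finset (Fin d)} (hs : i₀ ∉ s) (P : Finset ℤ) :
    #((basisSet s ∪ axisSet i₀ P) + dil q (basisSet s ∪ axisSet i₀ P)) =
      #s * #s + 2 * (#s * #P) + #(image₂ (fun m n => m + q * n) P P) := by
  have hq0 : q ≠ 0 := by rintro rfl; norm_num at hq
  have hB : ∀ y ∈ basisSet s, y i₀ = 0 := by
    simp only [basisSet, forall_mem_image]
    intro i hi
    exact Pi.single_eq_of_ne (ne_of_mem_of_not_mem hi hs).symm _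
  rw [card_union_add_dil_union hq _ (offAxisSum_of_mem_basisSet hs)
      (offAxisSum_of_mem_axisSet i₀ P), card_basisSet_add_dil hq, card_basisSet_add_dil hq,
    card_axisSet_add_dil hq0 _ _ hB, axisSet_add_dil_axisSet, card_basisSet, card_axisSet,
    card_axisSet]
  ring

lemma image₂_Ioo_add_two_mul {N : ℤ} (hN : 2 ≤ N) :
    image₂ (fun m n => m + 2 * n) (Ioo 0 N) (Ioo 0 N) = Icc 3 (3 * N - 3) := by
  ext k
  simp only [mem_image₂, mem_Ioo, mem_Icc]
  constructor
  · rintro ⟨m, ⟨_, _⟩, n, ⟨_, _⟩, rfl⟩; omega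
  · rintro ⟨h1, h2⟩
    -- `n = 1` while `k ≤ N + 1`, then `n = ⌈(k - N + 1) / 2⌉`, keeping `m = k - 2n` in `(0, N)`
    refine ⟨k - 2 * (if k ≤ N + 1 then 1 else (k - N + 2) / 2), ?_,
      (if k ≤ N + 1 then 1 else (k - N + 2) / 2), ?_, ?_⟩ <;> split_ifs <;> omega

lemma image₂_Ioo_add_neg_two_mul {N : ℤ} (hN : 2 ≤ N) :
    image₂ (fun m n => m + (-2) * n) (Ioo 0 N) (Ioo 0 N) = Icc (3 - 2 * N) (N - 3) := by
  ext k
  simp only [mem_image₂, mem_Ioo, mem_Icc]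
  constructor
  · rintro ⟨m, ⟨_, _⟩, n, ⟨_, _⟩, rfl⟩; omega
  · rintro ⟨h1, h2⟩
    -- `n = 1` while `k ≥ -1`, then `n = ⌈(1 - k) / 2⌉`, keeping `m = k + 2n` in `(0, N)`
    refine ⟨k + 2 * (if -1 ≤ k then 1 else (2 - k) / 2), ?_,
      (if -1 ≤ k then 1 else (2 - k) / 2), ?_, ?_⟩ <;> split_ifs <;> omega

end

theorem construction_dilate_two {d : ℕ} (hd : 2 ≤ d) (N : ℤ)
    (hN : (d : ℤ) + 1 ≤ N) (A : Finset (Fin d → ℤ))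
    (hA : A = (Finset.univ.image (fun i : Fin d => (Pi.single i 1 : Fin d → ℤ))) ∪
        ((Finset.Ioo (0 : ℤ) N).image
          (fun n => n • (Pi.single (⟨0, by omega⟩ : Fin d) 1 : Fin d → ℤ)))) :
    ((A + dil 2 A).card : ℤ) = (2 * d + 1) * A.card - d * (d + 1) ∧
    ((A + dil (-2) A).card : ℤ) = (2 * d + 1) * A.card - d * (d + 1) := by
  set i₀ : Fin d := ⟨0, by omega⟩
  have hs : i₀ ∉ univ.erase i₀ := notMem_erase i₀ univ
  replace hA : A = basisSet (univ.erase i₀) ∪ axisSet i₀ (Ioo 0 N) := by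
    have hsmul :
        (fun n : ℤ => n • (Pi.single i₀ 1 : Fin d → ℤ)) = Pi.single (M := fun _ => ℤ) i₀ :=
      funext fun n => by rw [← Pi.single_smul', smul_eq_mul, mul_one]
    rw [hA, hsmul, ← basisSet_univ_union_axisSet (mem_Ioo.2 ⟨one_pos, by omega⟩)]
    rfl
  have hcard_s : (#(univ.erase i₀) : ℤ) = d - 1 := by
    rw [card_erase_of_mem (mem_univ _), card_univ, Fintype.card_fin]; omega
  have hcard_P : (#(Ioo 0 N) : ℤ) = N - 1 := by rw [Int.card_Ioo]; omega
  have hcard_A : (#A : ℤ) = (d - 1) + (N - 1) := by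
    rw [hA, card_union_of_disjoint (disjoint_basisSet_axisSet hs _), card_basisSet, card_axisSet]
    push_cast
    rw [hcard_s, hcard_P]
  have hcount : ∀ q : ℤ, 2 ≤ |q| →
      (#(image₂ (fun m n => m + q * n) (Ioo 0 N) (Ioo 0 N)) : ℤ) = 3 * N - 5 →
      (#(A + dil q A) : ℤ) = (2 * d + 1) * #A - d * (d + 1) := by
    intro q hq hI
    rw [hcard_A, hA, card_basisSet_union_axisSet_add_dil hq hs]
    push_cast
    rw [hcard_s, hcard_P, hI]
    ring
  exact ⟨hcount 2 (by norm_num) (by rw [image₂_Ioo_add_two_mul (by omega), Int.card_Icc]; omega),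
    hcount (-2) (by norm_num) (by rw [image₂_Ioo_add_neg_two_mul (by omega), Int.card_Icc]; omega)⟩
end

section
/- Let q be an integer with |q| > 1 and let A' ⊆ Z^2 be a finite set of rank 2 with |A'| = 4. Then |A' + q·A'| ≥ 14. -/
open Pointwise

set_option linter.dupNamespace false

namespace FP


abbrev V := Fin 2 → ℤ

def Ev (x y z : V) : Fin 6 → V
  | ⟨0,_⟩ => x
  | ⟨1,_⟩ => y
  | ⟨2,_⟩ => z
  | ⟨3,_⟩ => fun cc => y cc - x cc
  | ⟨4,_⟩ => fun cc => z cc - x cc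
  | ⟨5,_⟩ => fun cc => z cc - y cc

def Col (x y z : V) : Fin 4 → Prop
  | ⟨0,_⟩ => x 0 * y 1 - x 1 * y 0 = 0
  | ⟨1,_⟩ => x 0 * z 1 - x 1 * z 0 = 0
  | ⟨2,_⟩ => y 0 * z 1 - y 1 * z 0 = 0
  | ⟨3,_⟩ => (x 0 * y 1 - x 1 * y 0) - (x 0 * z 1 - x 1 * z 0) + (y 0 * z 1 - y 1 * z 0) = 0

def Rel (s : ℤ) (u v : V) : Prop := (∀ cc, u cc = s * v cc) ∨ (∀ cc, v cc = s * u cc)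

lemma Rel.symm {s : ℤ} {u v : V} (h : Rel s u v) : Rel s v u := h.elim Or.inr Or.inl

def isM : Fin 6 → Fin 6 → Bool := fun α β => α.1 + β.1 == 5

def triOf : Fin 6 → Fin 6 → Fin 4
  | ⟨0,_⟩, ⟨1,_⟩ => 0 | ⟨1,_⟩, ⟨0,_⟩ => 0
  | ⟨0,_⟩, ⟨3,_⟩ => 0 | ⟨3,_⟩, ⟨0,_⟩ => 0
  | ⟨1,_⟩, ⟨3,_⟩ => 0 | ⟨3,_⟩, ⟨1,_⟩ => 0
  | ⟨0,_⟩, ⟨2,_⟩ => 1 | ⟨2,_⟩, ⟨0,_⟩ => 1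
  | ⟨0,_⟩, ⟨4,_⟩ => 1 | ⟨4,_⟩, ⟨0,_⟩ => 1
  | ⟨2,_⟩, ⟨4,_⟩ => 1 | ⟨4,_⟩, ⟨2,_⟩ => 1
  | ⟨1,_⟩, ⟨2,_⟩ => 2 | ⟨2,_⟩, ⟨1,_⟩ => 2
  | ⟨1,_⟩, ⟨5,_⟩ => 2 | ⟨5,_⟩, ⟨1,_⟩ => 2
  | ⟨2,_⟩, ⟨5,_⟩ => 2 | ⟨5,_⟩, ⟨2,_⟩ => 2
  | ⟨3,_⟩, ⟨4,_⟩ => 3 | ⟨4,_⟩, ⟨3,_⟩ => 3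
  | ⟨3,_⟩, ⟨5,_⟩ => 3 | ⟨5,_⟩, ⟨3,_⟩ => 3
  | ⟨4,_⟩, ⟨5,_⟩ => 3 | ⟨5,_⟩, ⟨4,_⟩ => 3
  | _, _ => 0

def pid : Fin 6 → Fin 6 → Fin 3
  | ⟨0,_⟩, ⟨1,_⟩ => 0 | ⟨1,_⟩, ⟨0,_⟩ => 0
  | ⟨0,_⟩, ⟨3,_⟩ => 1 | ⟨3,_⟩, ⟨0,_⟩ => 1
  | ⟨1,_⟩, ⟨3,_⟩ => 2 | ⟨3,_⟩, ⟨1,_⟩ => 2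
  | ⟨0,_⟩, ⟨2,_⟩ => 0 | ⟨2,_⟩, ⟨0,_⟩ => 0
  | ⟨0,_⟩, ⟨4,_⟩ => 1 | ⟨4,_⟩, ⟨0,_⟩ => 1
  | ⟨2,_⟩, ⟨4,_⟩ => 2 | ⟨4,_⟩, ⟨2,_⟩ => 2
  | ⟨1,_⟩, ⟨2,_⟩ => 0 | ⟨2,_⟩, ⟨1,_⟩ => 0
  | ⟨1,_⟩, ⟨5,_⟩ => 1 | ⟨5,_⟩, ⟨1,_⟩ => 1
  | ⟨2,_⟩, ⟨5,_⟩ => 2 | ⟨5,_⟩, ⟨2,_⟩ => 2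
  | ⟨3,_⟩, ⟨4,_⟩ => 0 | ⟨4,_⟩, ⟨3,_⟩ => 0
  | ⟨3,_⟩, ⟨5,_⟩ => 1 | ⟨5,_⟩, ⟨3,_⟩ => 1
  | ⟨4,_⟩, ⟨5,_⟩ => 2 | ⟨5,_⟩, ⟨4,_⟩ => 2
  | _, _ => 0

def eA : Fin 4 → Fin 3 → Fin 6
  | ⟨0,_⟩, ⟨0,_⟩ => 0 | ⟨0,_⟩, ⟨1,_⟩ => 0 | ⟨0,_⟩, ⟨2,_⟩ => 1
  | ⟨1,_⟩, ⟨0,_⟩ => 0 | ⟨1,_⟩, ⟨1,_⟩ => 0 | ⟨1,_⟩, ⟨2,_⟩ => 2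
  | ⟨2,_⟩, ⟨0,_⟩ => 1 | ⟨2,_⟩, ⟨1,_⟩ => 1 | ⟨2,_⟩, ⟨2,_⟩ => 2
  | ⟨3,_⟩, ⟨0,_⟩ => 3 | ⟨3,_⟩, ⟨1,_⟩ => 3 | ⟨3,_⟩, ⟨2,_⟩ => 4

def eB : Fin 4 → Fin 3 → Fin 6
  | ⟨0,_⟩, ⟨0,_⟩ => 1 | ⟨0,_⟩, ⟨1,_⟩ => 3 | ⟨0,_⟩, ⟨2,_⟩ => 3
  | ⟨1,_⟩, ⟨0,_⟩ => 2 | ⟨1,_⟩, ⟨1,_⟩ => 4 | ⟨1,_⟩, ⟨2,_⟩ => 4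
  | ⟨2,_⟩, ⟨0,_⟩ => 2 | ⟨2,_⟩, ⟨1,_⟩ => 5 | ⟨2,_⟩, ⟨2,_⟩ => 5
  | ⟨3,_⟩, ⟨0,_⟩ => 4 | ⟨3,_⟩, ⟨1,_⟩ => 5 | ⟨3,_⟩, ⟨2,_⟩ => 5

lemma pidInj : ∀ α β α' β' : Fin 6, isM α β = false → isM α' β' = false →
    α ≠ β → α' ≠ β' → triOf α β = triOf α' β' → pid α β = pid α' β' →
    ((α' = α ∧ β' = β) ∨ (α' = β ∧ β' = α)) := by decide

lemma fin3cover (c₁ c₂ c₃ : Fin 3) (h12 : c₁ ≠ c₂) (h13 : c₁ ≠ c₃) (h23 : c₂ ≠ c₃) :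
    ∀ c : Fin 3, c = c₁ ∨ c = c₂ ∨ c = c₃ := by revert c₁ c₂ c₃; decide

lemma finSix (α : Fin 6) : α = 0 ∨ α = 1 ∨ α = 2 ∨ α = 3 ∨ α = 4 ∨ α = 5 := by omega
lemma finFour (t : Fin 4) : t = 0 ∨ t = 1 ∨ t = 2 ∨ t = 3 := by omega
lemma finTwo (cc : Fin 2) : cc = 0 ∨ cc = 1 := by omega

lemma parallelD {s : ℤ} {u v : V} (h : ∀ cc, u cc = s * v cc) :
    u 0 * v 1 - u 1 * v 0 = 0 := by linear_combination v 1 * h 0 - v 0 * h 1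

lemma mulcancel {n v0 v1 : ℤ} (h0 : n * v0 = 0) (h1 : n * v1 = 0)
    (hv : ¬(v0 = 0 ∧ v1 = 0)) : n = 0 := by
  rcases mul_eq_zero.mp h0 with h | h
  · exact h
  · rcases mul_eq_zero.mp h1 with h' | h'
    · exact h'
    · exact absurd ⟨h, h'⟩ hv

lemma pl {u0 u1 v0 v1 w0 w1 : ℤ} (h1 : u0*v1 - u1*v0 = 0) (h2 : u0*w1 - u1*w0 = 0)
    (hu : ¬(u0 = 0 ∧ u1 = 0)) : v0*w1 - v1*w0 = 0 := by
  by_cases hu0 : u0 = 0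
  · have hu1 : u1 ≠ 0 := fun h => hu ⟨hu0, h⟩
    have hv0 : v0 = 0 := by
      have : u1 * v0 = 0 := by linear_combination -h1 + v1 * hu0
      rcases mul_eq_zero.mp this with h | h
      · exact absurd h hu1
      · exact h
    have hw0 : w0 = 0 := by
      have : u1 * w0 = 0 := by linear_combination -h2 + w1 * hu0
      rcases mul_eq_zero.mp this with h | h
      · exact absurd h hu1
      · exact h
    rw [hv0, hw0]; ring
  · have key : u0 * (v0*w1 - v1*w0) = v0*(u0*w1 - u1*w0) - w0*(u0*v1 - u1*v0) := by ring
    rw [h1, h2] at key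
    simp at key
    rcases key with h | h
    · exact absurd h hu0
    · exact h
lemma ker2 {a b c d e f x0 y0 z0 x1 y1 z1 : ℤ}
    (hr0 : a*x0 + b*y0 + c*z0 = 0) (ht0 : d*x0 + e*y0 + f*z0 = 0)
    (hr1 : a*x1 + b*y1 + c*z1 = 0) (ht1 : d*x1 + e*y1 + f*z1 = 0)
    (hx : ¬(x0 = 0 ∧ x1 = 0)) (hy : ¬(y0 = 0 ∧ y1 = 0)) (hz : ¬(z0 = 0 ∧ z1 = 0))
    (hn : ¬(b*f - c*e = 0 ∧ c*d - a*f = 0 ∧ a*e - b*d = 0)) :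
    x0*y1 - x1*y0 = 0 ∧ x0*z1 - x1*z0 = 0 ∧ y0*z1 - y1*z0 = 0 := by
  set n1 := b*f - c*e with hn1
  set n2 := c*d - a*f with hn2
  set n3 := a*e - b*d with hn3
  have P0 : x0 * n2 - y0 * n1 = 0 := by rw [hn1, hn2]; linear_combination c * ht0 - f * hr0
  have P1 : x1 * n2 - y1 * n1 = 0 := by rw [hn1, hn2]; linear_combination c * ht1 - f * hr1
  have Q0 : x0 * n3 - z0 * n1 = 0 := by rw [hn1, hn3]; linear_combination e * hr0 - b * ht0
  have Q1 : x1 * n3 - z1 * n1 = 0 := by rw [hn1, hn3]; linear_combination e * hr1 - b * ht1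
  have R0 : y0 * n3 - z0 * n2 = 0 := by rw [hn2, hn3]; linear_combination a * ht0 - d * hr0
  have R1 : y1 * n3 - z1 * n2 = 0 := by rw [hn2, hn3]; linear_combination a * ht1 - d * hr1
  by_cases h1 : n1 = 0
  · by_cases h2 : n2 = 0
    · have h3 : n3 ≠ 0 := fun h => hn ⟨h1, h2, h⟩
      have dxz : x0*z1 - x1*z0 = 0 := by
        have : n3 * (x0*z1 - x1*z0) = 0 := by linear_combination z1 * Q0 - z0 * Q1
        exact (mul_eq_zero.mp this).resolve_left h3
      have dyz : y0*z1 - y1*z0 = 0 := by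
        have : n3 * (y0*z1 - y1*z0) = 0 := by linear_combination z1 * R0 - z0 * R1
        exact (mul_eq_zero.mp this).resolve_left h3
      have dxy : x0*y1 - x1*y0 = 0 := by
        have t1 : z0*x1 - z1*x0 = 0 := by linarith [dxz]
        have t2 : z0*y1 - z1*y0 = 0 := by linarith [dyz]
        exact pl t1 t2 hz
      exact ⟨dxy, dxz, dyz⟩
    · have dxy : x0*y1 - x1*y0 = 0 := by
        have : n2 * (x0*y1 - x1*y0) = 0 := by linear_combination y1 * P0 - y0 * P1
        exact (mul_eq_zero.mp this).resolve_left h2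
      have dyz : y0*z1 - y1*z0 = 0 := by
        have : n2 * (y0*z1 - y1*z0) = 0 := by linear_combination y1 * R0 - y0 * R1
        exact (mul_eq_zero.mp this).resolve_left h2
      have dxz : x0*z1 - x1*z0 = 0 := by
        have t1 : y0*x1 - y1*x0 = 0 := by linarith [dxy]
        exact pl t1 dyz hy
      exact ⟨dxy, dxz, dyz⟩
  · have dxy : x0*y1 - x1*y0 = 0 := by
      have : n1 * (x0*y1 - x1*y0) = 0 := by linear_combination x1 * P0 - x0 * P1
      exact (mul_eq_zero.mp this).resolve_left h1
    have dxz : x0*z1 - x1*z0 = 0 := by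
      have : n1 * (x0*z1 - x1*z0) = 0 := by linear_combination x1 * Q0 - x0 * Q1
      exact (mul_eq_zero.mp this).resolve_left h1
    have dyz : y0*z1 - y1*z0 = 0 := pl dxy dxz hx
    exact ⟨dxy, dxz, dyz⟩

lemma q2ge4 {q : ℤ} (hq : 2 ≤ q ∨ q ≤ -2) : 4 ≤ q^2 := by rcases hq with h | h <;> nlinarith
lemma sne0 {q s : ℤ} (hq : 2 ≤ q ∨ q ≤ -2) (hs : s^2 = q^2) : s ≠ 0 := by
  have := q2ge4 hq; intro h; rw [h] at hs; nlinarith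
lemma sne1 {q s : ℤ} (hq : 2 ≤ q ∨ q ≤ -2) (hs : s^2 = q^2) : s ≠ 1 := by
  have := q2ge4 hq; intro h; rw [h] at hs; nlinarith
lemma snem1 {q s : ℤ} (hq : 2 ≤ q ∨ q ≤ -2) (hs : s^2 = q^2) : s ≠ -1 := by
  have := q2ge4 hq; intro h; rw [h] at hs; nlinarith
lemma N1 {q s s' : ℤ} (hq : 2 ≤ q ∨ q ≤ -2) (hs : s^2 = q^2) (hs' : s'^2 = q^2) : s + s' ≠ 1 := by
  intro h
  have h1 : (s - s') * (s + s') = 0 := by linear_combination hs - hs'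
  rw [h] at h1
  have : s = s' := by linarith [h1]
  have := q2ge4 hq
  nlinarith [h, this]
lemma N2 {q s s' s'' : ℤ} (hq : 2 ≤ q ∨ q ≤ -2) (hs : s^2 = q^2) (hs' : s'^2 = q^2) (hs'' : s''^2 = q^2) :
    s'' ≠ s * s' := by
  intro h
  have := q2ge4 hq
  have h2 : q^2 = q^2 * q^2 := by
    calc q^2 = s''^2 := hs''.symm
    _ = (s*s')^2 := by rw [h]
    _ = s^2 * s'^2 := by ring
    _ = q^2 * q^2 := by rw [hs, hs']
  nlinarith
lemma N3 {q s s' s'' : ℤ} (hq : 2 ≤ q ∨ q ≤ -2) (hs : s^2 = q^2) (hs' : s'^2 = q^2) (hs'' : s''^2 = q^2) :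
    s * s' * s'' ≠ 1 := by
  intro h
  have := q2ge4 hq
  have h2 : q^2 * q^2 * q^2 = 1 := by
    calc q^2 * q^2 * q^2 = s^2 * s'^2 * s''^2 := by rw [hs, hs', hs'']
    _ = (s * s' * s'')^2 := by ring
    _ = 1 := by rw [h]; ring
  nlinarith
lemma N4 {s s'' : ℤ} (hs : s^2 = s''^2) : s'' ≠ s + 1 := by
  intro h
  have h2 : 2*s + 1 = 0 := by rw [h] at hs; linarith [hs]
  omega
lemma N5 {q s s' : ℤ} (hq : 2 ≤ q ∨ q ≤ -2) (hs : s^2 = q^2) (hs' : s'^2 = q^2) : s * s' ≠ 1 := by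
  intro h
  have := q2ge4 hq
  have h2 : q^2 * q^2 = 1 := by
    calc q^2 * q^2 = s^2 * s'^2 := by rw [hs, hs']
    _ = (s * s')^2 := by ring
    _ = 1 := by rw [h]; ring
  nlinarith
lemma N5m {q s s' : ℤ} (hq : 2 ≤ q ∨ q ≤ -2) (hs : s^2 = q^2) (hs' : s'^2 = q^2) : s * s' ≠ -1 := by
  intro h
  have := q2ge4 hq
  have h2 : q^2 * q^2 = 1 := by
    calc q^2 * q^2 = s^2 * s'^2 := by rw [hs, hs']
    _ = (s * s')^2 := by ring
    _ = 1 := by rw [h]; ring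
  nlinarith
lemma adjRel (x y z : V) (α β : Fin 6) (s : ℤ) (hM : isM α β = false) (hne : α ≠ β)
    (h : ∀ cc, Ev x y z α cc = s * Ev x y z β cc) : Col x y z (triOf α β) := by
  have hD := parallelD h
  rcases finSix α with rfl|rfl|rfl|rfl|rfl|rfl <;> rcases finSix β with rfl|rfl|rfl|rfl|rfl|rfl
  · exact absurd rfl hne
  · simp only [Ev] at hD
    show x 0 * y 1 - x 1 * y 0 = 0
    linear_combination hD
  · simp only [Ev] at hD
    show x 0 * z 1 - x 1 * z 0 = 0
    linear_combination hD
  · simp only [Ev] at hD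
    show x 0 * y 1 - x 1 * y 0 = 0
    linear_combination hD
  · simp only [Ev] at hD
    show x 0 * z 1 - x 1 * z 0 = 0
    linear_combination hD
  · exact absurd hM (by decide)
  · simp only [Ev] at hD
    show x 0 * y 1 - x 1 * y 0 = 0
    linear_combination -hD
  · exact absurd rfl hne
  · simp only [Ev] at hD
    show y 0 * z 1 - y 1 * z 0 = 0
    linear_combination hD
  · simp only [Ev] at hD
    show x 0 * y 1 - x 1 * y 0 = 0
    linear_combination hD
  · exact absurd hM (by decide)
  · simp only [Ev] at hD
    show y 0 * z 1 - y 1 * z 0 = 0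
    linear_combination hD
  · simp only [Ev] at hD
    show x 0 * z 1 - x 1 * z 0 = 0
    linear_combination -hD
  · simp only [Ev] at hD
    show y 0 * z 1 - y 1 * z 0 = 0
    linear_combination -hD
  · exact absurd rfl hne
  · exact absurd hM (by decide)
  · simp only [Ev] at hD
    show x 0 * z 1 - x 1 * z 0 = 0
    linear_combination hD
  · simp only [Ev] at hD
    show y 0 * z 1 - y 1 * z 0 = 0
    linear_combination hD
  · simp only [Ev] at hD
    show x 0 * y 1 - x 1 * y 0 = 0
    linear_combination -hD
  · simp only [Ev] at hD
    show x 0 * y 1 - x 1 * y 0 = 0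
    linear_combination -hD
  · exact absurd hM (by decide)
  · exact absurd rfl hne
  · simp only [Ev] at hD
    show (x 0 * y 1 - x 1 * y 0) - (x 0 * z 1 - x 1 * z 0) + (y 0 * z 1 - y 1 * z 0) = 0
    linear_combination hD
  · simp only [Ev] at hD
    show (x 0 * y 1 - x 1 * y 0) - (x 0 * z 1 - x 1 * z 0) + (y 0 * z 1 - y 1 * z 0) = 0
    linear_combination hD
  · simp only [Ev] at hD
    show x 0 * z 1 - x 1 * z 0 = 0
    linear_combination -hD
  · exact absurd hM (by decide)
  · simp only [Ev] at hD
    show x 0 * z 1 - x 1 * z 0 = 0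
    linear_combination -hD
  · simp only [Ev] at hD
    show (x 0 * y 1 - x 1 * y 0) - (x 0 * z 1 - x 1 * z 0) + (y 0 * z 1 - y 1 * z 0) = 0
    linear_combination -hD
  · exact absurd rfl hne
  · simp only [Ev] at hD
    show (x 0 * y 1 - x 1 * y 0) - (x 0 * z 1 - x 1 * z 0) + (y 0 * z 1 - y 1 * z 0) = 0
    linear_combination hD
  · exact absurd hM (by decide)
  · simp only [Ev] at hD
    show y 0 * z 1 - y 1 * z 0 = 0
    linear_combination -hD
  · simp only [Ev] at hD
    show y 0 * z 1 - y 1 * z 0 = 0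
    linear_combination -hD
  · simp only [Ev] at hD
    show (x 0 * y 1 - x 1 * y 0) - (x 0 * z 1 - x 1 * z 0) + (y 0 * z 1 - y 1 * z 0) = 0
    linear_combination -hD
  · simp only [Ev] at hD
    show (x 0 * y 1 - x 1 * y 0) - (x 0 * z 1 - x 1 * z 0) + (y 0 * z 1 - y 1 * z 0) = 0
    linear_combination -hD
  · exact absurd rfl hne

lemma colPair (x y z : V) (t t' : Fin 4) (hne : t ≠ t')
    (hnx : ¬(x 0 = 0 ∧ x 1 = 0)) (hny : ¬(y 0 = 0 ∧ y 1 = 0)) (hnz : ¬(z 0 = 0 ∧ z 1 = 0))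
    (hnyx : ¬(y 0 - x 0 = 0 ∧ y 1 - x 1 = 0)) (hnzx : ¬(z 0 - x 0 = 0 ∧ z 1 - x 1 = 0))
    (hnzy : ¬(z 0 - y 0 = 0 ∧ z 1 - y 1 = 0))
    (hc : Col x y z t) (hc' : Col x y z t')
    (hdet : ¬((x 0 * y 1 - x 1 * y 0 = 0) ∧ (x 0 * z 1 - x 1 * z 0 = 0) ∧ (y 0 * z 1 - y 1 * z 0 = 0))) : False := by
  rcases finFour t with rfl|rfl|rfl|rfl <;> rcases finFour t' with rfl|rfl|rfl|rfl <;>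
      simp only [Col] at hc hc'
  · exact absurd rfl hne
  ·
      exact hdet ⟨hc, hc', pl hc hc' hnx⟩
  ·
      have h1 : y 0 * x 1 - y 1 * x 0 = 0 := by linear_combination -hc
      have hQ : x 0 * z 1 - x 1 * z 0 = 0 := by linear_combination pl h1 hc' hny
      exact hdet ⟨hc, hQ, hc'⟩
  ·
      have h1 : (y 0 - x 0) * x 1 - (y 1 - x 1) * x 0 = 0 := by linear_combination -hc
      have h2 : (y 0 - x 0) * (z 1 - x 1) - (y 1 - x 1) * (z 0 - x 0) = 0 := by linear_combination hc'
      have hQ : x 0 * z 1 - x 1 * z 0 = 0 := by linear_combination pl h1 h2 hnyx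
      exact hdet ⟨hc, hQ, pl hc hQ hnx⟩
  ·
      exact hdet ⟨hc', hc, pl hc' hc hnx⟩
  · exact absurd rfl hne
  ·
      have h1 : z 0 * x 1 - z 1 * x 0 = 0 := by linear_combination -hc
      have h2 : z 0 * y 1 - z 1 * y 0 = 0 := by linear_combination -hc'
      exact hdet ⟨pl h1 h2 hnz, hc, hc'⟩
  ·
      have h1 : (z 0 - x 0) * x 1 - (z 1 - x 1) * x 0 = 0 := by linear_combination -hc
      have h2 : (z 0 - x 0) * (y 1 - x 1) - (z 1 - x 1) * (y 0 - x 0) = 0 := by linear_combination -hc'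
      have hP : x 0 * y 1 - x 1 * y 0 = 0 := by linear_combination pl h1 h2 hnzx
      exact hdet ⟨hP, hc, pl hP hc hnx⟩
  ·
      have h1 : y 0 * x 1 - y 1 * x 0 = 0 := by linear_combination -hc'
      have hQ : x 0 * z 1 - x 1 * z 0 = 0 := by linear_combination pl h1 hc hny
      exact hdet ⟨hc', hQ, hc⟩
  ·
      have h1 : z 0 * x 1 - z 1 * x 0 = 0 := by linear_combination -hc'
      have h2 : z 0 * y 1 - z 1 * y 0 = 0 := by linear_combination -hc
      exact hdet ⟨pl h1 h2 hnz, hc', hc⟩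
  · exact absurd rfl hne
  ·
      have h1 : (z 0 - y 0) * y 1 - (z 1 - y 1) * y 0 = 0 := by linear_combination -hc
      have h2 : (z 0 - y 0) * (y 1 - x 1) - (z 1 - y 1) * (y 0 - x 0) = 0 := by linear_combination -hc'
      have hP : x 0 * y 1 - x 1 * y 0 = 0 := by linear_combination pl h1 h2 hnzy
      have h3 : y 0 * x 1 - y 1 * x 0 = 0 := by linear_combination -hP
      have hQ : x 0 * z 1 - x 1 * z 0 = 0 := by linear_combination pl h3 hc hny
      exact hdet ⟨hP, hQ, hc⟩
  ·
      have h1 : (y 0 - x 0) * x 1 - (y 1 - x 1) * x 0 = 0 := by linear_combination -hc'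
      have h2 : (y 0 - x 0) * (z 1 - x 1) - (y 1 - x 1) * (z 0 - x 0) = 0 := by linear_combination hc
      have hQ : x 0 * z 1 - x 1 * z 0 = 0 := by linear_combination pl h1 h2 hnyx
      exact hdet ⟨hc', hQ, pl hc' hQ hnx⟩
  ·
      have h1 : (z 0 - x 0) * x 1 - (z 1 - x 1) * x 0 = 0 := by linear_combination -hc'
      have h2 : (z 0 - x 0) * (y 1 - x 1) - (z 1 - x 1) * (y 0 - x 0) = 0 := by linear_combination -hc
      have hP : x 0 * y 1 - x 1 * y 0 = 0 := by linear_combination pl h1 h2 hnzx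
      exact hdet ⟨hP, hc', pl hP hc' hnx⟩
  ·
      have h1 : (z 0 - y 0) * y 1 - (z 1 - y 1) * y 0 = 0 := by linear_combination -hc'
      have h2 : (z 0 - y 0) * (y 1 - x 1) - (z 1 - y 1) * (y 0 - x 0) = 0 := by linear_combination -hc
      have hP : x 0 * y 1 - x 1 * y 0 = 0 := by linear_combination pl h1 h2 hnzy
      have h3 : y 0 * x 1 - y 1 * x 0 = 0 := by linear_combination -hP
      have hQ : x 0 * z 1 - x 1 * z 0 = 0 := by linear_combination pl h3 hc' hny
      exact hdet ⟨hP, hQ, hc'⟩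
  · exact absurd rfl hne

lemma isMcases : ∀ α β : Fin 6, isM α β = true →
    (α = 0 ∧ β = 5) ∨ (α = 5 ∧ β = 0) ∨ (α = 1 ∧ β = 4) ∨ (α = 4 ∧ β = 1) ∨
    (α = 2 ∧ β = 3) ∨ (α = 3 ∧ β = 2) := by decide

lemma disjCol (x y z : V) (α β : Fin 6) (s : ℤ) (t : Fin 4) (hM : isM α β = true)
    (h : ∀ cc, Ev x y z α cc = s * Ev x y z β cc) (hc : Col x y z t)
    (hnx : ¬(x 0 = 0 ∧ x 1 = 0)) (hny : ¬(y 0 = 0 ∧ y 1 = 0)) (hnz : ¬(z 0 = 0 ∧ z 1 = 0))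
    (hnyx : ¬(y 0 - x 0 = 0 ∧ y 1 - x 1 = 0)) (hnzx : ¬(z 0 - x 0 = 0 ∧ z 1 - x 1 = 0))
    (hnzy : ¬(z 0 - y 0 = 0 ∧ z 1 - y 1 = 0))
    (hdet : ¬((x 0 * y 1 - x 1 * y 0 = 0) ∧ (x 0 * z 1 - x 1 * z 0 = 0) ∧ (y 0 * z 1 - y 1 * z 0 = 0))) : False := by
  have hD := parallelD h
  rcases isMcases α β hM with ⟨rfl,rfl⟩|⟨rfl,rfl⟩|⟨rfl,rfl⟩|⟨rfl,rfl⟩|⟨rfl,rfl⟩|⟨rfl,rfl⟩ <;>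
      simp only [Ev] at hD <;>
      rcases finFour t with rfl|rfl|rfl|rfl <;> simp only [Col] at hc
  ·
    have hDc : x 0 * (z 1 - y 1) - x 1 * (z 0 - y 0) = 0 := by linear_combination hD
    have hQ : x 0 * z 1 - x 1 * z 0 = 0 := by linear_combination hDc + hc
    exact hdet ⟨hc, hQ, pl hc hQ hnx⟩
  ·
    have hDc : x 0 * (z 1 - y 1) - x 1 * (z 0 - y 0) = 0 := by linear_combination hD
    have hP : x 0 * y 1 - x 1 * y 0 = 0 := by linear_combination hc - hDc
    exact hdet ⟨hP, hc, pl hP hc hnx⟩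
  ·
    have hDc : x 0 * (z 1 - y 1) - x 1 * (z 0 - y 0) = 0 := by linear_combination hD
    have h1 : (z 0 - y 0) * x 1 - (z 1 - y 1) * x 0 = 0 := by linear_combination -hDc
    have h2 : (z 0 - y 0) * y 1 - (z 1 - y 1) * y 0 = 0 := by linear_combination -hc
    have hP : x 0 * y 1 - x 1 * y 0 = 0 := pl h1 h2 hnzy
    have hQ : x 0 * z 1 - x 1 * z 0 = 0 := by linear_combination hDc + hP
    exact hdet ⟨hP, hQ, hc⟩
  ·
    have hDc : x 0 * (z 1 - y 1) - x 1 * (z 0 - y 0) = 0 := by linear_combination hD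
    have h1 : (z 0 - y 0) * x 1 - (z 1 - y 1) * x 0 = 0 := by linear_combination -hDc
    have h2 : (z 0 - y 0) * (y 1 - x 1) - (z 1 - y 1) * (y 0 - x 0) = 0 := by linear_combination -hc
    have hP : x 0 * y 1 - x 1 * y 0 = 0 := by linear_combination pl h1 h2 hnzy
    have hQ : x 0 * z 1 - x 1 * z 0 = 0 := by linear_combination hDc + hP
    have hR : y 0 * z 1 - y 1 * z 0 = 0 := by linear_combination hc - hP + hQ
    exact hdet ⟨hP, hQ, hR⟩
  ·
    have hDc : x 0 * (z 1 - y 1) - x 1 * (z 0 - y 0) = 0 := by linear_combination -hD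
    have hQ : x 0 * z 1 - x 1 * z 0 = 0 := by linear_combination hDc + hc
    exact hdet ⟨hc, hQ, pl hc hQ hnx⟩
  ·
    have hDc : x 0 * (z 1 - y 1) - x 1 * (z 0 - y 0) = 0 := by linear_combination -hD
    have hP : x 0 * y 1 - x 1 * y 0 = 0 := by linear_combination hc - hDc
    exact hdet ⟨hP, hc, pl hP hc hnx⟩
  ·
    have hDc : x 0 * (z 1 - y 1) - x 1 * (z 0 - y 0) = 0 := by linear_combination -hD
    have h1 : (z 0 - y 0) * x 1 - (z 1 - y 1) * x 0 = 0 := by linear_combination -hDc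
    have h2 : (z 0 - y 0) * y 1 - (z 1 - y 1) * y 0 = 0 := by linear_combination -hc
    have hP : x 0 * y 1 - x 1 * y 0 = 0 := pl h1 h2 hnzy
    have hQ : x 0 * z 1 - x 1 * z 0 = 0 := by linear_combination hDc + hP
    exact hdet ⟨hP, hQ, hc⟩
  ·
    have hDc : x 0 * (z 1 - y 1) - x 1 * (z 0 - y 0) = 0 := by linear_combination -hD
    have h1 : (z 0 - y 0) * x 1 - (z 1 - y 1) * x 0 = 0 := by linear_combination -hDc
    have h2 : (z 0 - y 0) * (y 1 - x 1) - (z 1 - y 1) * (y 0 - x 0) = 0 := by linear_combination -hc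
    have hP : x 0 * y 1 - x 1 * y 0 = 0 := by linear_combination pl h1 h2 hnzy
    have hQ : x 0 * z 1 - x 1 * z 0 = 0 := by linear_combination hDc + hP
    have hR : y 0 * z 1 - y 1 * z 0 = 0 := by linear_combination hc - hP + hQ
    exact hdet ⟨hP, hQ, hR⟩
  ·
    have hDc : y 0 * (z 1 - x 1) - y 1 * (z 0 - x 0) = 0 := by linear_combination hD
    have hR : y 0 * z 1 - y 1 * z 0 = 0 := by linear_combination hDc - hc
    have h1 : y 0 * x 1 - y 1 * x 0 = 0 := by linear_combination -hc
    have hQ : x 0 * z 1 - x 1 * z 0 = 0 := pl h1 hR hny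
    exact hdet ⟨hc, hQ, hR⟩
  ·
    have hDc : y 0 * (z 1 - x 1) - y 1 * (z 0 - x 0) = 0 := by linear_combination hD
    have h1 : (z 0 - x 0) * y 1 - (z 1 - x 1) * y 0 = 0 := by linear_combination -hDc
    have h2 : (z 0 - x 0) * x 1 - (z 1 - x 1) * x 0 = 0 := by linear_combination -hc
    have hP : x 0 * y 1 - x 1 * y 0 = 0 := by linear_combination -(pl h1 h2 hnzx)
    have hR : y 0 * z 1 - y 1 * z 0 = 0 := by linear_combination hDc - hP
    exact hdet ⟨hP, hc, hR⟩
  ·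
    have hDc : y 0 * (z 1 - x 1) - y 1 * (z 0 - x 0) = 0 := by linear_combination hD
    have hP : x 0 * y 1 - x 1 * y 0 = 0 := by linear_combination hDc - hc
    have h1 : y 0 * x 1 - y 1 * x 0 = 0 := by linear_combination -hP
    have hQ : x 0 * z 1 - x 1 * z 0 = 0 := pl h1 hc hny
    exact hdet ⟨hP, hQ, hc⟩
  ·
    have hDc : y 0 * (z 1 - x 1) - y 1 * (z 0 - x 0) = 0 := by linear_combination hD
    have h1 : (z 0 - x 0) * y 1 - (z 1 - x 1) * y 0 = 0 := by linear_combination -hDc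
    have h2 : (z 0 - x 0) * (y 1 - x 1) - (z 1 - x 1) * (y 0 - x 0) = 0 := by linear_combination -hc
    have hP : x 0 * y 1 - x 1 * y 0 = 0 := by linear_combination pl h1 h2 hnzx
    have hR : y 0 * z 1 - y 1 * z 0 = 0 := by linear_combination hDc - hP
    have hQ : x 0 * z 1 - x 1 * z 0 = 0 := by linear_combination -hc + hP + hR
    exact hdet ⟨hP, hQ, hR⟩
  ·
    have hDc : y 0 * (z 1 - x 1) - y 1 * (z 0 - x 0) = 0 := by linear_combination -hD
    have hR : y 0 * z 1 - y 1 * z 0 = 0 := by linear_combination hDc - hc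
    have h1 : y 0 * x 1 - y 1 * x 0 = 0 := by linear_combination -hc
    have hQ : x 0 * z 1 - x 1 * z 0 = 0 := pl h1 hR hny
    exact hdet ⟨hc, hQ, hR⟩
  ·
    have hDc : y 0 * (z 1 - x 1) - y 1 * (z 0 - x 0) = 0 := by linear_combination -hD
    have h1 : (z 0 - x 0) * y 1 - (z 1 - x 1) * y 0 = 0 := by linear_combination -hDc
    have h2 : (z 0 - x 0) * x 1 - (z 1 - x 1) * x 0 = 0 := by linear_combination -hc
    have hP : x 0 * y 1 - x 1 * y 0 = 0 := by linear_combination -(pl h1 h2 hnzx)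
    have hR : y 0 * z 1 - y 1 * z 0 = 0 := by linear_combination hDc - hP
    exact hdet ⟨hP, hc, hR⟩
  ·
    have hDc : y 0 * (z 1 - x 1) - y 1 * (z 0 - x 0) = 0 := by linear_combination -hD
    have hP : x 0 * y 1 - x 1 * y 0 = 0 := by linear_combination hDc - hc
    have h1 : y 0 * x 1 - y 1 * x 0 = 0 := by linear_combination -hP
    have hQ : x 0 * z 1 - x 1 * z 0 = 0 := pl h1 hc hny
    exact hdet ⟨hP, hQ, hc⟩
  ·
    have hDc : y 0 * (z 1 - x 1) - y 1 * (z 0 - x 0) = 0 := by linear_combination -hD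
    have h1 : (z 0 - x 0) * y 1 - (z 1 - x 1) * y 0 = 0 := by linear_combination -hDc
    have h2 : (z 0 - x 0) * (y 1 - x 1) - (z 1 - x 1) * (y 0 - x 0) = 0 := by linear_combination -hc
    have hP : x 0 * y 1 - x 1 * y 0 = 0 := by linear_combination pl h1 h2 hnzx
    have hR : y 0 * z 1 - y 1 * z 0 = 0 := by linear_combination hDc - hP
    have hQ : x 0 * z 1 - x 1 * z 0 = 0 := by linear_combination -hc + hP + hR
    exact hdet ⟨hP, hQ, hR⟩
  ·
    have hDc : z 0 * (y 1 - x 1) - z 1 * (y 0 - x 0) = 0 := by linear_combination hD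
    have h1 : (y 0 - x 0) * z 1 - (y 1 - x 1) * z 0 = 0 := by linear_combination -hDc
    have h2 : (y 0 - x 0) * x 1 - (y 1 - x 1) * x 0 = 0 := by linear_combination -hc
    have hQ : x 0 * z 1 - x 1 * z 0 = 0 := by linear_combination -(pl h1 h2 hnyx)
    have hR : y 0 * z 1 - y 1 * z 0 = 0 := by linear_combination hQ - hDc
    exact hdet ⟨hc, hQ, hR⟩
  ·
    have hDc : z 0 * (y 1 - x 1) - z 1 * (y 0 - x 0) = 0 := by linear_combination hD
    have hR : y 0 * z 1 - y 1 * z 0 = 0 := by linear_combination hc - hDc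
    have h1 : z 0 * x 1 - z 1 * x 0 = 0 := by linear_combination -hc
    have h2 : z 0 * y 1 - z 1 * y 0 = 0 := by linear_combination -hR
    have hP : x 0 * y 1 - x 1 * y 0 = 0 := pl h1 h2 hnz
    exact hdet ⟨hP, hc, hR⟩
  ·
    have hDc : z 0 * (y 1 - x 1) - z 1 * (y 0 - x 0) = 0 := by linear_combination hD
    have hQ : x 0 * z 1 - x 1 * z 0 = 0 := by linear_combination hDc + hc
    have h1 : z 0 * x 1 - z 1 * x 0 = 0 := by linear_combination -hQ
    have h2 : z 0 * y 1 - z 1 * y 0 = 0 := by linear_combination -hc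
    have hP : x 0 * y 1 - x 1 * y 0 = 0 := pl h1 h2 hnz
    exact hdet ⟨hP, hQ, hc⟩
  ·
    have hDc : z 0 * (y 1 - x 1) - z 1 * (y 0 - x 0) = 0 := by linear_combination hD
    have h1 : (y 0 - x 0) * z 1 - (y 1 - x 1) * z 0 = 0 := by linear_combination -hDc
    have h2 : (y 0 - x 0) * (z 1 - x 1) - (y 1 - x 1) * (z 0 - x 0) = 0 := by linear_combination hc
    have hQ : x 0 * z 1 - x 1 * z 0 = 0 := by linear_combination pl h1 h2 hnyx
    have hR : y 0 * z 1 - y 1 * z 0 = 0 := by linear_combination hQ - hDc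
    have hP : x 0 * y 1 - x 1 * y 0 = 0 := by linear_combination hc + hQ - hR
    exact hdet ⟨hP, hQ, hR⟩
  ·
    have hDc : z 0 * (y 1 - x 1) - z 1 * (y 0 - x 0) = 0 := by linear_combination -hD
    have h1 : (y 0 - x 0) * z 1 - (y 1 - x 1) * z 0 = 0 := by linear_combination -hDc
    have h2 : (y 0 - x 0) * x 1 - (y 1 - x 1) * x 0 = 0 := by linear_combination -hc
    have hQ : x 0 * z 1 - x 1 * z 0 = 0 := by linear_combination -(pl h1 h2 hnyx)
    have hR : y 0 * z 1 - y 1 * z 0 = 0 := by linear_combination hQ - hDc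
    exact hdet ⟨hc, hQ, hR⟩
  ·
    have hDc : z 0 * (y 1 - x 1) - z 1 * (y 0 - x 0) = 0 := by linear_combination -hD
    have hR : y 0 * z 1 - y 1 * z 0 = 0 := by linear_combination hc - hDc
    have h1 : z 0 * x 1 - z 1 * x 0 = 0 := by linear_combination -hc
    have h2 : z 0 * y 1 - z 1 * y 0 = 0 := by linear_combination -hR
    have hP : x 0 * y 1 - x 1 * y 0 = 0 := pl h1 h2 hnz
    exact hdet ⟨hP, hc, hR⟩
  ·
    have hDc : z 0 * (y 1 - x 1) - z 1 * (y 0 - x 0) = 0 := by linear_combination -hD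
    have hQ : x 0 * z 1 - x 1 * z 0 = 0 := by linear_combination hDc + hc
    have h1 : z 0 * x 1 - z 1 * x 0 = 0 := by linear_combination -hQ
    have h2 : z 0 * y 1 - z 1 * y 0 = 0 := by linear_combination -hc
    have hP : x 0 * y 1 - x 1 * y 0 = 0 := pl h1 h2 hnz
    exact hdet ⟨hP, hQ, hc⟩
  ·
    have hDc : z 0 * (y 1 - x 1) - z 1 * (y 0 - x 0) = 0 := by linear_combination -hD
    have h1 : (y 0 - x 0) * z 1 - (y 1 - x 1) * z 0 = 0 := by linear_combination -hDc
    have h2 : (y 0 - x 0) * (z 1 - x 1) - (y 1 - x 1) * (z 0 - x 0) = 0 := by linear_combination hc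
    have hQ : x 0 * z 1 - x 1 * z 0 = 0 := by linear_combination pl h1 h2 hnyx
    have hR : y 0 * z 1 - y 1 * z 0 = 0 := by linear_combination hQ - hDc
    have hP : x 0 * y 1 - x 1 * y 0 = 0 := by linear_combination hc + hQ - hR
    exact hdet ⟨hP, hQ, hR⟩

lemma disjDisj (x y z : V) (α β α' β' : Fin 6) (s s' q : ℤ) (hq : 2 ≤ q ∨ q ≤ -2)
    (hs : s^2 = q^2) (hs' : s'^2 = q^2)
    (hM : isM α β = true) (hM' : isM α' β' = true)
    (hpne : ¬((α' = α ∧ β' = β) ∨ (α' = β ∧ β' = α)))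
    (h : ∀ cc, Ev x y z α cc = s * Ev x y z β cc)
    (h' : ∀ cc, Ev x y z α' cc = s' * Ev x y z β' cc)
    (hnx : ¬(x 0 = 0 ∧ x 1 = 0)) (hny : ¬(y 0 = 0 ∧ y 1 = 0)) (hnz : ¬(z 0 = 0 ∧ z 1 = 0))
    (hdet : ¬((x 0 * y 1 - x 1 * y 0 = 0) ∧ (x 0 * z 1 - x 1 * z 0 = 0) ∧ (y 0 * z 1 - y 1 * z 0 = 0))) : False := by
  rcases isMcases α β hM with ⟨rfl,rfl⟩|⟨rfl,rfl⟩|⟨rfl,rfl⟩|⟨rfl,rfl⟩|⟨rfl,rfl⟩|⟨rfl,rfl⟩ <;>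
      rcases isMcases α' β' hM' with ⟨rfl,rfl⟩|⟨rfl,rfl⟩|⟨rfl,rfl⟩|⟨rfl,rfl⟩|⟨rfl,rfl⟩|⟨rfl,rfl⟩
  · exact hpne (Or.inl ⟨rfl, rfl⟩)
  · exact hpne (Or.inr ⟨rfl, rfl⟩)
  ·
    have e0 := h 0; have e1 := h 1; have f0 := h' 0; have f1 := h' 1
    simp only [Ev] at e0 e1 f0 f1
    have hr0 : (1 : ℤ) * x 0 + (s) * y 0 + (-s) * z 0 = 0 := by linear_combination e0
    have hr1 : (1 : ℤ) * x 1 + (s) * y 1 + (-s) * z 1 = 0 := by linear_combination e1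
    have ht0 : (s' : ℤ) * x 0 + (1) * y 0 + (-s') * z 0 = 0 := by linear_combination f0
    have ht1 : (s' : ℤ) * x 1 + (1) * y 1 + (-s') * z 1 = 0 := by linear_combination f1
    have K := ker2 hr0 ht0 hr1 ht1 hnx hny hnz (by
      intro hE
      exact N5 hq hs hs' (by linarith [hE.2.2]))
    exact hdet K
  ·
    have e0 := h 0; have e1 := h 1; have f0 := h' 0; have f1 := h' 1
    simp only [Ev] at e0 e1 f0 f1
    have hr0 : (1 : ℤ) * x 0 + (s) * y 0 + (-s) * z 0 = 0 := by linear_combination e0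
    have hr1 : (1 : ℤ) * x 1 + (s) * y 1 + (-s) * z 1 = 0 := by linear_combination e1
    have ht0 : (-1 : ℤ) * x 0 + (-s') * y 0 + (1) * z 0 = 0 := by linear_combination f0
    have ht1 : (-1 : ℤ) * x 1 + (-s') * y 1 + (1) * z 1 = 0 := by linear_combination f1
    have K := ker2 hr0 ht0 hr1 ht1 hnx hny hnz (by
      intro hE
      exact sne1 hq hs (by linarith [hE.2.1]))
    exact hdet K
  ·
    have e0 := h 0; have e1 := h 1; have f0 := h' 0; have f1 := h' 1
    simp only [Ev] at e0 e1 f0 f1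
    have hr0 : (1 : ℤ) * x 0 + (s) * y 0 + (-s) * z 0 = 0 := by linear_combination e0
    have hr1 : (1 : ℤ) * x 1 + (s) * y 1 + (-s) * z 1 = 0 := by linear_combination e1
    have ht0 : (s' : ℤ) * x 0 + (-s') * y 0 + (1) * z 0 = 0 := by linear_combination f0
    have ht1 : (s' : ℤ) * x 1 + (-s') * y 1 + (1) * z 1 = 0 := by linear_combination f1
    have K := ker2 hr0 ht0 hr1 ht1 hnx hny hnz (by
      intro hE
      exact N5m hq hs hs' (by linarith [hE.2.1]))
    exact hdet K
  ·
    have e0 := h 0; have e1 := h 1; have f0 := h' 0; have f1 := h' 1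
    simp only [Ev] at e0 e1 f0 f1
    have hr0 : (1 : ℤ) * x 0 + (s) * y 0 + (-s) * z 0 = 0 := by linear_combination e0
    have hr1 : (1 : ℤ) * x 1 + (s) * y 1 + (-s) * z 1 = 0 := by linear_combination e1
    have ht0 : (-1 : ℤ) * x 0 + (1) * y 0 + (-s') * z 0 = 0 := by linear_combination f0
    have ht1 : (-1 : ℤ) * x 1 + (1) * y 1 + (-s') * z 1 = 0 := by linear_combination f1
    have K := ker2 hr0 ht0 hr1 ht1 hnx hny hnz (by
      intro hE
      exact snem1 hq hs (by linarith [hE.2.2]))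
    exact hdet K
  · exact hpne (Or.inr ⟨rfl, rfl⟩)
  · exact hpne (Or.inl ⟨rfl, rfl⟩)
  ·
    have e0 := h 0; have e1 := h 1; have f0 := h' 0; have f1 := h' 1
    simp only [Ev] at e0 e1 f0 f1
    have hr0 : (-s : ℤ) * x 0 + (-1) * y 0 + (1) * z 0 = 0 := by linear_combination e0
    have hr1 : (-s : ℤ) * x 1 + (-1) * y 1 + (1) * z 1 = 0 := by linear_combination e1
    have ht0 : (s' : ℤ) * x 0 + (1) * y 0 + (-s') * z 0 = 0 := by linear_combination f0
    have ht1 : (s' : ℤ) * x 1 + (1) * y 1 + (-s') * z 1 = 0 := by linear_combination f1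
    have K := ker2 hr0 ht0 hr1 ht1 hnx hny hnz (by
      intro hE
      exact sne1 hq hs' (by linarith [hE.1]))
    exact hdet K
  ·
    have e0 := h 0; have e1 := h 1; have f0 := h' 0; have f1 := h' 1
    simp only [Ev] at e0 e1 f0 f1
    have hr0 : (-s : ℤ) * x 0 + (-1) * y 0 + (1) * z 0 = 0 := by linear_combination e0
    have hr1 : (-s : ℤ) * x 1 + (-1) * y 1 + (1) * z 1 = 0 := by linear_combination e1
    have ht0 : (-1 : ℤ) * x 0 + (-s') * y 0 + (1) * z 0 = 0 := by linear_combination f0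
    have ht1 : (-1 : ℤ) * x 1 + (-s') * y 1 + (1) * z 1 = 0 := by linear_combination f1
    have K := ker2 hr0 ht0 hr1 ht1 hnx hny hnz (by
      intro hE
      exact sne1 hq hs' (by linarith [hE.1]))
    exact hdet K
  ·
    have e0 := h 0; have e1 := h 1; have f0 := h' 0; have f1 := h' 1
    simp only [Ev] at e0 e1 f0 f1
    have hr0 : (-s : ℤ) * x 0 + (-1) * y 0 + (1) * z 0 = 0 := by linear_combination e0
    have hr1 : (-s : ℤ) * x 1 + (-1) * y 1 + (1) * z 1 = 0 := by linear_combination e1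
    have ht0 : (s' : ℤ) * x 0 + (-s') * y 0 + (1) * z 0 = 0 := by linear_combination f0
    have ht1 : (s' : ℤ) * x 1 + (-s') * y 1 + (1) * z 1 = 0 := by linear_combination f1
    have K := ker2 hr0 ht0 hr1 ht1 hnx hny hnz (by
      intro hE
      exact sne1 hq hs' (by linarith [hE.1]))
    exact hdet K
  ·
    have e0 := h 0; have e1 := h 1; have f0 := h' 0; have f1 := h' 1
    simp only [Ev] at e0 e1 f0 f1
    have hr0 : (-s : ℤ) * x 0 + (-1) * y 0 + (1) * z 0 = 0 := by linear_combination e0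
    have hr1 : (-s : ℤ) * x 1 + (-1) * y 1 + (1) * z 1 = 0 := by linear_combination e1
    have ht0 : (-1 : ℤ) * x 0 + (1) * y 0 + (-s') * z 0 = 0 := by linear_combination f0
    have ht1 : (-1 : ℤ) * x 1 + (1) * y 1 + (-s') * z 1 = 0 := by linear_combination f1
    have K := ker2 hr0 ht0 hr1 ht1 hnx hny hnz (by
      intro hE
      exact sne1 hq hs' (by linarith [hE.1]))
    exact hdet K
  ·
    have e0 := h 0; have e1 := h 1; have f0 := h' 0; have f1 := h' 1
    simp only [Ev] at e0 e1 f0 f1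
    have hr0 : (s : ℤ) * x 0 + (1) * y 0 + (-s) * z 0 = 0 := by linear_combination e0
    have hr1 : (s : ℤ) * x 1 + (1) * y 1 + (-s) * z 1 = 0 := by linear_combination e1
    have ht0 : (1 : ℤ) * x 0 + (s') * y 0 + (-s') * z 0 = 0 := by linear_combination f0
    have ht1 : (1 : ℤ) * x 1 + (s') * y 1 + (-s') * z 1 = 0 := by linear_combination f1
    have K := ker2 hr0 ht0 hr1 ht1 hnx hny hnz (by
      intro hE
      exact N5 hq hs hs' (by linarith [hE.2.2]))
    exact hdet K
  ·
    have e0 := h 0; have e1 := h 1; have f0 := h' 0; have f1 := h' 1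
    simp only [Ev] at e0 e1 f0 f1
    have hr0 : (s : ℤ) * x 0 + (1) * y 0 + (-s) * z 0 = 0 := by linear_combination e0
    have hr1 : (s : ℤ) * x 1 + (1) * y 1 + (-s) * z 1 = 0 := by linear_combination e1
    have ht0 : (-s' : ℤ) * x 0 + (-1) * y 0 + (1) * z 0 = 0 := by linear_combination f0
    have ht1 : (-s' : ℤ) * x 1 + (-1) * y 1 + (1) * z 1 = 0 := by linear_combination f1
    have K := ker2 hr0 ht0 hr1 ht1 hnx hny hnz (by
      intro hE
      exact sne1 hq hs (by linarith [hE.1]))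
    exact hdet K
  · exact hpne (Or.inl ⟨rfl, rfl⟩)
  · exact hpne (Or.inr ⟨rfl, rfl⟩)
  ·
    have e0 := h 0; have e1 := h 1; have f0 := h' 0; have f1 := h' 1
    simp only [Ev] at e0 e1 f0 f1
    have hr0 : (s : ℤ) * x 0 + (1) * y 0 + (-s) * z 0 = 0 := by linear_combination e0
    have hr1 : (s : ℤ) * x 1 + (1) * y 1 + (-s) * z 1 = 0 := by linear_combination e1
    have ht0 : (s' : ℤ) * x 0 + (-s') * y 0 + (1) * z 0 = 0 := by linear_combination f0
    have ht1 : (s' : ℤ) * x 1 + (-s') * y 1 + (1) * z 1 = 0 := by linear_combination f1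
    have K := ker2 hr0 ht0 hr1 ht1 hnx hny hnz (by
      intro hE
      exact N5 hq hs hs' (by linarith [hE.1]))
    exact hdet K
  ·
    have e0 := h 0; have e1 := h 1; have f0 := h' 0; have f1 := h' 1
    simp only [Ev] at e0 e1 f0 f1
    have hr0 : (s : ℤ) * x 0 + (1) * y 0 + (-s) * z 0 = 0 := by linear_combination e0
    have hr1 : (s : ℤ) * x 1 + (1) * y 1 + (-s) * z 1 = 0 := by linear_combination e1
    have ht0 : (-1 : ℤ) * x 0 + (1) * y 0 + (-s') * z 0 = 0 := by linear_combination f0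
    have ht1 : (-1 : ℤ) * x 1 + (1) * y 1 + (-s') * z 1 = 0 := by linear_combination f1
    have K := ker2 hr0 ht0 hr1 ht1 hnx hny hnz (by
      intro hE
      exact snem1 hq hs (by linarith [hE.2.2]))
    exact hdet K
  ·
    have e0 := h 0; have e1 := h 1; have f0 := h' 0; have f1 := h' 1
    simp only [Ev] at e0 e1 f0 f1
    have hr0 : (-1 : ℤ) * x 0 + (-s) * y 0 + (1) * z 0 = 0 := by linear_combination e0
    have hr1 : (-1 : ℤ) * x 1 + (-s) * y 1 + (1) * z 1 = 0 := by linear_combination e1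
    have ht0 : (1 : ℤ) * x 0 + (s') * y 0 + (-s') * z 0 = 0 := by linear_combination f0
    have ht1 : (1 : ℤ) * x 1 + (s') * y 1 + (-s') * z 1 = 0 := by linear_combination f1
    have K := ker2 hr0 ht0 hr1 ht1 hnx hny hnz (by
      intro hE
      exact sne1 hq hs' (by linarith [hE.2.1]))
    exact hdet K
  ·
    have e0 := h 0; have e1 := h 1; have f0 := h' 0; have f1 := h' 1
    simp only [Ev] at e0 e1 f0 f1
    have hr0 : (-1 : ℤ) * x 0 + (-s) * y 0 + (1) * z 0 = 0 := by linear_combination e0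
    have hr1 : (-1 : ℤ) * x 1 + (-s) * y 1 + (1) * z 1 = 0 := by linear_combination e1
    have ht0 : (-s' : ℤ) * x 0 + (-1) * y 0 + (1) * z 0 = 0 := by linear_combination f0
    have ht1 : (-s' : ℤ) * x 1 + (-1) * y 1 + (1) * z 1 = 0 := by linear_combination f1
    have K := ker2 hr0 ht0 hr1 ht1 hnx hny hnz (by
      intro hE
      exact sne1 hq hs (by linarith [hE.1]))
    exact hdet K
  · exact hpne (Or.inr ⟨rfl, rfl⟩)
  · exact hpne (Or.inl ⟨rfl, rfl⟩)
  ·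
    have e0 := h 0; have e1 := h 1; have f0 := h' 0; have f1 := h' 1
    simp only [Ev] at e0 e1 f0 f1
    have hr0 : (-1 : ℤ) * x 0 + (-s) * y 0 + (1) * z 0 = 0 := by linear_combination e0
    have hr1 : (-1 : ℤ) * x 1 + (-s) * y 1 + (1) * z 1 = 0 := by linear_combination e1
    have ht0 : (s' : ℤ) * x 0 + (-s') * y 0 + (1) * z 0 = 0 := by linear_combination f0
    have ht1 : (s' : ℤ) * x 1 + (-s') * y 1 + (1) * z 1 = 0 := by linear_combination f1
    have K := ker2 hr0 ht0 hr1 ht1 hnx hny hnz (by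
      intro hE
      exact snem1 hq hs' (by linarith [hE.2.1]))
    exact hdet K
  ·
    have e0 := h 0; have e1 := h 1; have f0 := h' 0; have f1 := h' 1
    simp only [Ev] at e0 e1 f0 f1
    have hr0 : (-1 : ℤ) * x 0 + (-s) * y 0 + (1) * z 0 = 0 := by linear_combination e0
    have hr1 : (-1 : ℤ) * x 1 + (-s) * y 1 + (1) * z 1 = 0 := by linear_combination e1
    have ht0 : (-1 : ℤ) * x 0 + (1) * y 0 + (-s') * z 0 = 0 := by linear_combination f0
    have ht1 : (-1 : ℤ) * x 1 + (1) * y 1 + (-s') * z 1 = 0 := by linear_combination f1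
    have K := ker2 hr0 ht0 hr1 ht1 hnx hny hnz (by
      intro hE
      exact N5 hq hs hs' (by linarith [hE.1]))
    exact hdet K
  ·
    have e0 := h 0; have e1 := h 1; have f0 := h' 0; have f1 := h' 1
    simp only [Ev] at e0 e1 f0 f1
    have hr0 : (s : ℤ) * x 0 + (-s) * y 0 + (1) * z 0 = 0 := by linear_combination e0
    have hr1 : (s : ℤ) * x 1 + (-s) * y 1 + (1) * z 1 = 0 := by linear_combination e1
    have ht0 : (1 : ℤ) * x 0 + (s') * y 0 + (-s') * z 0 = 0 := by linear_combination f0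
    have ht1 : (1 : ℤ) * x 1 + (s') * y 1 + (-s') * z 1 = 0 := by linear_combination f1
    have K := ker2 hr0 ht0 hr1 ht1 hnx hny hnz (by
      intro hE
      exact N5m hq hs hs' (by linarith [hE.2.1]))
    exact hdet K
  ·
    have e0 := h 0; have e1 := h 1; have f0 := h' 0; have f1 := h' 1
    simp only [Ev] at e0 e1 f0 f1
    have hr0 : (s : ℤ) * x 0 + (-s) * y 0 + (1) * z 0 = 0 := by linear_combination e0
    have hr1 : (s : ℤ) * x 1 + (-s) * y 1 + (1) * z 1 = 0 := by linear_combination e1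
    have ht0 : (-s' : ℤ) * x 0 + (-1) * y 0 + (1) * z 0 = 0 := by linear_combination f0
    have ht1 : (-s' : ℤ) * x 1 + (-1) * y 1 + (1) * z 1 = 0 := by linear_combination f1
    have K := ker2 hr0 ht0 hr1 ht1 hnx hny hnz (by
      intro hE
      exact sne1 hq hs (by linarith [hE.1]))
    exact hdet K
  ·
    have e0 := h 0; have e1 := h 1; have f0 := h' 0; have f1 := h' 1
    simp only [Ev] at e0 e1 f0 f1
    have hr0 : (s : ℤ) * x 0 + (-s) * y 0 + (1) * z 0 = 0 := by linear_combination e0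
    have hr1 : (s : ℤ) * x 1 + (-s) * y 1 + (1) * z 1 = 0 := by linear_combination e1
    have ht0 : (s' : ℤ) * x 0 + (1) * y 0 + (-s') * z 0 = 0 := by linear_combination f0
    have ht1 : (s' : ℤ) * x 1 + (1) * y 1 + (-s') * z 1 = 0 := by linear_combination f1
    have K := ker2 hr0 ht0 hr1 ht1 hnx hny hnz (by
      intro hE
      exact N5 hq hs hs' (by linarith [hE.1]))
    exact hdet K
  ·
    have e0 := h 0; have e1 := h 1; have f0 := h' 0; have f1 := h' 1
    simp only [Ev] at e0 e1 f0 f1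
    have hr0 : (s : ℤ) * x 0 + (-s) * y 0 + (1) * z 0 = 0 := by linear_combination e0
    have hr1 : (s : ℤ) * x 1 + (-s) * y 1 + (1) * z 1 = 0 := by linear_combination e1
    have ht0 : (-1 : ℤ) * x 0 + (-s') * y 0 + (1) * z 0 = 0 := by linear_combination f0
    have ht1 : (-1 : ℤ) * x 1 + (-s') * y 1 + (1) * z 1 = 0 := by linear_combination f1
    have K := ker2 hr0 ht0 hr1 ht1 hnx hny hnz (by
      intro hE
      exact snem1 hq hs (by linarith [hE.2.1]))
    exact hdet K
  · exact hpne (Or.inl ⟨rfl, rfl⟩)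
  · exact hpne (Or.inr ⟨rfl, rfl⟩)
  ·
    have e0 := h 0; have e1 := h 1; have f0 := h' 0; have f1 := h' 1
    simp only [Ev] at e0 e1 f0 f1
    have hr0 : (-1 : ℤ) * x 0 + (1) * y 0 + (-s) * z 0 = 0 := by linear_combination e0
    have hr1 : (-1 : ℤ) * x 1 + (1) * y 1 + (-s) * z 1 = 0 := by linear_combination e1
    have ht0 : (1 : ℤ) * x 0 + (s') * y 0 + (-s') * z 0 = 0 := by linear_combination f0
    have ht1 : (1 : ℤ) * x 1 + (s') * y 1 + (-s') * z 1 = 0 := by linear_combination f1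
    have K := ker2 hr0 ht0 hr1 ht1 hnx hny hnz (by
      intro hE
      exact snem1 hq hs' (by linarith [hE.2.2]))
    exact hdet K
  ·
    have e0 := h 0; have e1 := h 1; have f0 := h' 0; have f1 := h' 1
    simp only [Ev] at e0 e1 f0 f1
    have hr0 : (-1 : ℤ) * x 0 + (1) * y 0 + (-s) * z 0 = 0 := by linear_combination e0
    have hr1 : (-1 : ℤ) * x 1 + (1) * y 1 + (-s) * z 1 = 0 := by linear_combination e1
    have ht0 : (-s' : ℤ) * x 0 + (-1) * y 0 + (1) * z 0 = 0 := by linear_combination f0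
    have ht1 : (-s' : ℤ) * x 1 + (-1) * y 1 + (1) * z 1 = 0 := by linear_combination f1
    have K := ker2 hr0 ht0 hr1 ht1 hnx hny hnz (by
      intro hE
      exact sne1 hq hs (by linarith [hE.1]))
    exact hdet K
  ·
    have e0 := h 0; have e1 := h 1; have f0 := h' 0; have f1 := h' 1
    simp only [Ev] at e0 e1 f0 f1
    have hr0 : (-1 : ℤ) * x 0 + (1) * y 0 + (-s) * z 0 = 0 := by linear_combination e0
    have hr1 : (-1 : ℤ) * x 1 + (1) * y 1 + (-s) * z 1 = 0 := by linear_combination e1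
    have ht0 : (s' : ℤ) * x 0 + (1) * y 0 + (-s') * z 0 = 0 := by linear_combination f0
    have ht1 : (s' : ℤ) * x 1 + (1) * y 1 + (-s') * z 1 = 0 := by linear_combination f1
    have K := ker2 hr0 ht0 hr1 ht1 hnx hny hnz (by
      intro hE
      exact snem1 hq hs' (by linarith [hE.2.2]))
    exact hdet K
  ·
    have e0 := h 0; have e1 := h 1; have f0 := h' 0; have f1 := h' 1
    simp only [Ev] at e0 e1 f0 f1
    have hr0 : (-1 : ℤ) * x 0 + (1) * y 0 + (-s) * z 0 = 0 := by linear_combination e0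
    have hr1 : (-1 : ℤ) * x 1 + (1) * y 1 + (-s) * z 1 = 0 := by linear_combination e1
    have ht0 : (-1 : ℤ) * x 0 + (-s') * y 0 + (1) * z 0 = 0 := by linear_combination f0
    have ht1 : (-1 : ℤ) * x 1 + (-s') * y 1 + (1) * z 1 = 0 := by linear_combination f1
    have K := ker2 hr0 ht0 hr1 ht1 hnx hny hnz (by
      intro hE
      exact N5 hq hs hs' (by linarith [hE.1]))
    exact hdet K
  · exact hpne (Or.inr ⟨rfl, rfl⟩)
  · exact hpne (Or.inl ⟨rfl, rfl⟩)

lemma relC (x y z : V) (α β : Fin 6) (s : ℤ) (hM : isM α β = false) (hne : α ≠ β)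
    (h : ∀ cc, Ev x y z α cc = s * Ev x y z β cc) :
    Rel s (Ev x y z (eA (triOf α β) (pid α β))) (Ev x y z (eB (triOf α β) (pid α β))) := by
  rcases finSix α with rfl|rfl|rfl|rfl|rfl|rfl <;> rcases finSix β with rfl|rfl|rfl|rfl|rfl|rfl
  · exact absurd rfl hne
  · exact Or.inl h
  · exact Or.inl h
  · exact Or.inl h
  · exact Or.inl h
  · exact absurd hM (by decide)
  · exact Or.inr h
  · exact absurd rfl hne
  · exact Or.inl h
  · exact Or.inl h
  · exact absurd hM (by decide)
  · exact Or.inl h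
  · exact Or.inr h
  · exact Or.inr h
  · exact absurd rfl hne
  · exact absurd hM (by decide)
  · exact Or.inl h
  · exact Or.inl h
  · exact Or.inr h
  · exact Or.inr h
  · exact absurd hM (by decide)
  · exact absurd rfl hne
  · exact Or.inl h
  · exact Or.inl h
  · exact Or.inr h
  · exact absurd hM (by decide)
  · exact Or.inr h
  · exact Or.inr h
  · exact absurd rfl hne
  · exact Or.inl h
  · exact absurd hM (by decide)
  · exact Or.inr h
  · exact Or.inr h
  · exact Or.inr h
  · exact Or.inr h
  · exact absurd rfl hne
lemma tri {q s₁ s₂ s₃ : ℤ} (hq : 2 ≤ q ∨ q ≤ -2)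
    (hs1 : s₁^2 = q^2) (hs2 : s₂^2 = q^2) (hs3 : s₃^2 = q^2)
    (u v w : V)
    (hu : ¬(u 0 = 0 ∧ u 1 = 0)) (hv : ¬(v 0 = 0 ∧ v 1 = 0)) (hw : ¬(w 0 = 0 ∧ w 1 = 0))
    (hweq : ∀ cc, w cc = u cc + v cc)
    (R1 : Rel s₁ u v) (R2 : Rel s₂ u w) (R3 : Rel s₃ v w) : False := by
  rcases R1 with r1 | r1 <;> rcases R2 with r2 | r2 <;> rcases R3 with r3 | r3
  · have key : ∀ cc, (s₂ + s₃ - 1) * w cc = 0 := fun cc => by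
      linear_combination -r2 cc - r3 cc - hweq cc
    have h0 := mulcancel (key 0) (key 1) hw
    exact N1 hq hs2 hs3 (by linarith)
  · have key : ∀ cc, (s₁ + 1 - s₃) * v cc = 0 := fun cc => by
      linear_combination -r1 cc - hweq cc + r3 cc
    have h0 := mulcancel (key 0) (key 1) hv
    exact N4 (hs1.trans hs3.symm) (by linarith)
  · have key : ∀ cc, (1 - s₁*s₂*s₃) * v cc = 0 := fun cc => by
      linear_combination r3 cc + s₃ * r2 cc + s₃*s₂*r1 cc
    have h0 := mulcancel (key 0) (key 1) hv
    exact N3 hq hs1 hs2 hs3 (by linarith)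
  · have key : ∀ cc, (s₁*s₂ - s₃) * v cc = 0 := fun cc => by
      linear_combination -s₂*r1 cc - r2 cc + r3 cc
    have h0 := mulcancel (key 0) (key 1) hv
    exact N2 hq hs1 hs2 hs3 (by linarith)
  · have key : ∀ cc, (s₁*s₂ - s₃) * w cc = 0 := fun cc => by
      linear_combination -s₁*r2 cc - r1 cc + r3 cc
    have h0 := mulcancel (key 0) (key 1) hw
    exact N2 hq hs1 hs2 hs3 (by linarith)
  · have key : ∀ cc, (1 - s₁*s₂*s₃) * u cc = 0 := fun cc => by
      linear_combination r2 cc + s₂*r3 cc + s₂*s₃*r1 cc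
    have h0 := mulcancel (key 0) (key 1) hu
    exact N3 hq hs1 hs2 hs3 (by linarith)
  · have key : ∀ cc, (s₁ - s₃*s₂) * u cc = 0 := fun cc => by
      linear_combination -r1 cc + r3 cc + s₃*r2 cc
    have h0 := mulcancel (key 0) (key 1) hu
    exact N2 hq hs3 hs2 hs1 (by linarith)
  · have key : ∀ cc, (s₂ - 1 - s₁) * u cc = 0 := fun cc => by
      linear_combination -r2 cc + hweq cc + r1 cc
    have h0 := mulcancel (key 0) (key 1) hu
    exact N4 (hs1.trans hs2.symm) (by linarith)

lemma relNe (x y z : V) {q s : ℤ} (hq : 2 ≤ q ∨ q ≤ -2) (hs : s^2 = q^2)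
    (Enz : ∀ γ : Fin 6, ¬(Ev x y z γ 0 = 0 ∧ Ev x y z γ 1 = 0))
    {α β : Fin 6} (h : ∀ cc, Ev x y z α cc = s * Ev x y z β cc) : α ≠ β := by
  rintro rfl
  have key : ∀ cc, (1 - s) * Ev x y z α cc = 0 := fun cc => by linear_combination h cc
  have h0 := mulcancel (key 0) (key 1) (Enz α)
  exact sne1 hq hs (by linarith)

lemma core (x y z : V) (q s₁ s₂ s₃ : ℤ) (hq : 2 ≤ q ∨ q ≤ -2)
    (hs1 : s₁^2 = q^2) (hs2 : s₂^2 = q^2) (hs3 : s₃^2 = q^2)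
    (Enz : ∀ γ : Fin 6, ¬(Ev x y z γ 0 = 0 ∧ Ev x y z γ 1 = 0))
    (hdet : ¬((x 0 * y 1 - x 1 * y 0 = 0) ∧ (x 0 * z 1 - x 1 * z 0 = 0) ∧ (y 0 * z 1 - y 1 * z 0 = 0)))
    (α₁ β₁ α₂ β₂ α₃ β₃ : Fin 6)
    (h1 : ∀ cc, Ev x y z α₁ cc = s₁ * Ev x y z β₁ cc)
    (h2 : ∀ cc, Ev x y z α₂ cc = s₂ * Ev x y z β₂ cc)
    (h3 : ∀ cc, Ev x y z α₃ cc = s₃ * Ev x y z β₃ cc)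
    (p12 : ¬((α₂ = α₁ ∧ β₂ = β₁) ∨ (α₂ = β₁ ∧ β₂ = α₁)))
    (p13 : ¬((α₃ = α₁ ∧ β₃ = β₁) ∨ (α₃ = β₁ ∧ β₃ = α₁)))
    (p23 : ¬((α₃ = α₂ ∧ β₃ = β₂) ∨ (α₃ = β₂ ∧ β₃ = α₂))) : False := by
  have hne1 : α₁ ≠ β₁ := relNe x y z hq hs1 Enz h1
  have hne2 : α₂ ≠ β₂ := relNe x y z hq hs2 Enz h2
  have hne3 : α₃ ≠ β₃ := relNe x y z hq hs3 Enz h3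
  have hnx : ¬(x 0 = 0 ∧ x 1 = 0) := Enz 0
  have hny : ¬(y 0 = 0 ∧ y 1 = 0) := Enz 1
  have hnz : ¬(z 0 = 0 ∧ z 1 = 0) := Enz 2
  have hnyx : ¬(y 0 - x 0 = 0 ∧ y 1 - x 1 = 0) := Enz 3
  have hnzx : ¬(z 0 - x 0 = 0 ∧ z 1 - x 1 = 0) := Enz 4
  have hnzy : ¬(z 0 - y 0 = 0 ∧ z 1 - y 1 = 0) := Enz 5
  cases hm1 : isM α₁ β₁ with
  | true =>
    cases hm2 : isM α₂ β₂ with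
    | true => exact disjDisj x y z α₁ β₁ α₂ β₂ s₁ s₂ q hq hs1 hs2 hm1 hm2 p12 h1 h2 hnx hny hnz hdet
    | false =>
      have c2 := adjRel x y z α₂ β₂ s₂ hm2 hne2 h2
      exact disjCol x y z α₁ β₁ s₁ (triOf α₂ β₂) hm1 h1 c2 hnx hny hnz hnyx hnzx hnzy hdet
  | false =>
    cases hm2 : isM α₂ β₂ with
    | true =>
      have c1 := adjRel x y z α₁ β₁ s₁ hm1 hne1 h1
      exact disjCol x y z α₂ β₂ s₂ (triOf α₁ β₁) hm2 h2 c1 hnx hny hnz hnyx hnzx hnzy hdet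
    | false =>
      cases hm3 : isM α₃ β₃ with
      | true =>
        have c1 := adjRel x y z α₁ β₁ s₁ hm1 hne1 h1
        exact disjCol x y z α₃ β₃ s₃ (triOf α₁ β₁) hm3 h3 c1 hnx hny hnz hnyx hnzx hnzy hdet
      | false =>
        have c1 := adjRel x y z α₁ β₁ s₁ hm1 hne1 h1
        have c2 := adjRel x y z α₂ β₂ s₂ hm2 hne2 h2
        have c3 := adjRel x y z α₃ β₃ s₃ hm3 hne3 h3
        by_cases ht12 : triOf α₁ β₁ = triOf α₂ β₂
        · by_cases ht13 : triOf α₁ β₁ = triOf α₃ β₃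
          · have ht23 : triOf α₂ β₂ = triOf α₃ β₃ := ht12.symm.trans ht13
            have hpid12 : pid α₁ β₁ ≠ pid α₂ β₂ := fun hp =>
              p12 (pidInj α₁ β₁ α₂ β₂ hm1 hm2 hne1 hne2 ht12 hp)
            have hpid13 : pid α₁ β₁ ≠ pid α₃ β₃ := fun hp =>
              p13 (pidInj α₁ β₁ α₃ β₃ hm1 hm3 hne1 hne3 ht13 hp)
            have hpid23 : pid α₂ β₂ ≠ pid α₃ β₃ := fun hp =>
              p23 (pidInj α₂ β₂ α₃ β₃ hm2 hm3 hne2 hne3 ht23 hp)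
            have cover := fin3cover _ _ _ hpid12 hpid13 hpid23
            have R1' := relC x y z α₁ β₁ s₁ hm1 hne1 h1
            have R2' := relC x y z α₂ β₂ s₂ hm2 hne2 h2
            have R3' := relC x y z α₃ β₃ s₃ hm3 hne3 h3
            rw [← ht12] at R2'
            rw [← ht13] at R3'
            have getR : ∀ c : Fin 3, ∃ s : ℤ, s^2 = q^2 ∧
                Rel s (Ev x y z (eA (triOf α₁ β₁) c)) (Ev x y z (eB (triOf α₁ β₁) c)) := by
              intro c
              rcases cover c with hc | hc | hc
              · exact ⟨s₁, hs1, by rw [hc]; exact R1'⟩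
              · exact ⟨s₂, hs2, by rw [hc]; exact R2'⟩
              · exact ⟨s₃, hs3, by rw [hc]; exact R3'⟩
            obtain ⟨sa, hsa, Ra⟩ := getR 0
            obtain ⟨sb, hsb, Rb⟩ := getR 1
            obtain ⟨sc, hsc, Rc⟩ := getR 2
            rcases finFour (triOf α₁ β₁) with h4 | h4 | h4 | h4 <;> rw [h4] at Ra Rb Rc
            · exact tri hq hsb hsa hsc (Ev x y z 0) (Ev x y z 3) (Ev x y z 1)
                (Enz 0) (Enz 3) (Enz 1)
                (fun cc => by show y cc = x cc + (y cc - x cc); ring) Rb Ra Rc.symm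
            · exact tri hq hsb hsa hsc (Ev x y z 0) (Ev x y z 4) (Ev x y z 2)
                (Enz 0) (Enz 4) (Enz 2)
                (fun cc => by show z cc = x cc + (z cc - x cc); ring) Rb Ra Rc.symm
            · exact tri hq hsb hsa hsc (Ev x y z 1) (Ev x y z 5) (Ev x y z 2)
                (Enz 1) (Enz 5) (Enz 2)
                (fun cc => by show z cc = y cc + (z cc - y cc); ring) Rb Ra Rc.symm
            · exact tri hq hsb hsa hsc (Ev x y z 3) (Ev x y z 5) (Ev x y z 4)
                (Enz 3) (Enz 5) (Enz 4)
                (fun cc => by show z cc - x cc = (y cc - x cc) + (z cc - y cc); ring) Rb Ra Rc.symm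
          · exact colPair x y z _ _ ht13 hnx hny hnz hnyx hnzx hnzy c1 c3 hdet
        · exact colPair x y z _ _ ht12 hnx hny hnz hnyx hnzx hnzy c1 c2 hdet
def pp (a b c d : V) : Fin 4 → V
  | ⟨0,_⟩ => a
  | ⟨1,_⟩ => b
  | ⟨2,_⟩ => c
  | ⟨3,_⟩ => d

def sg : Fin 4 → Fin 4 → ℤ := fun i k => if i.1 < k.1 then -1 else 1

def edgeIdx : Fin 4 → Fin 4 → Fin 6
  | ⟨0,_⟩,⟨1,_⟩ => 0 | ⟨1,_⟩,⟨0,_⟩ => 0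
  | ⟨0,_⟩,⟨2,_⟩ => 1 | ⟨2,_⟩,⟨0,_⟩ => 1
  | ⟨0,_⟩,⟨3,_⟩ => 2 | ⟨3,_⟩,⟨0,_⟩ => 2
  | ⟨1,_⟩,⟨2,_⟩ => 3 | ⟨2,_⟩,⟨1,_⟩ => 3
  | ⟨1,_⟩,⟨3,_⟩ => 4 | ⟨3,_⟩,⟨1,_⟩ => 4
  | ⟨2,_⟩,⟨3,_⟩ => 5 | ⟨3,_⟩,⟨2,_⟩ => 5
  | _,_ => 0

lemma edgeInv : ∀ i k i' k' : Fin 4, i ≠ k → i' ≠ k' → edgeIdx i k = edgeIdx i' k' →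
    ((i' = i ∧ k' = k) ∨ (i' = k ∧ k' = i)) := by decide

lemma edgeSym : ∀ i k : Fin 4, edgeIdx i k = edgeIdx k i := by decide

lemma sgcases (i k : Fin 4) : sg i k = 1 ∨ sg i k = -1 := by
  unfold sg
  split
  · right; rfl
  · left; rfl

lemma sgsq (i k : Fin 4) : sg i k * sg i k = 1 := by
  rcases sgcases i k with h | h <;> rw [h] <;> ring

lemma sgq2 (i k l j : Fin 4) (q : ℤ) : (sg i k * sg l j * q)^2 = q^2 := by
  rcases sgcases i k with h | h <;> rcases sgcases l j with h' | h' <;> rw [h, h'] <;> ring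

lemma EDGE (a b c d x y z : V)
    (hx : ∀ cc, x cc = b cc - a cc) (hy : ∀ cc, y cc = c cc - a cc)
    (hz : ∀ cc, z cc = d cc - a cc)
    (i k : Fin 4) (hik : i ≠ k) (cc : Fin 2) :
    pp a b c d i cc - pp a b c d k cc = sg i k * Ev x y z (edgeIdx i k) cc := by
  rcases finFour i with rfl|rfl|rfl|rfl <;> rcases finFour k with rfl|rfl|rfl|rfl
  · exact absurd rfl hik
  · show a cc - b cc = (-1 : ℤ) * (x cc); rw [hx cc]; ring
  · show a cc - c cc = (-1 : ℤ) * (y cc); rw [hy cc]; ring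
  · show a cc - d cc = (-1 : ℤ) * (z cc); rw [hz cc]; ring
  · show b cc - a cc = (1 : ℤ) * (x cc); rw [hx cc]; ring
  · exact absurd rfl hik
  · show b cc - c cc = (-1 : ℤ) * (y cc - x cc); rw [hx cc, hy cc]; ring
  · show b cc - d cc = (-1 : ℤ) * (z cc - x cc); rw [hx cc, hz cc]; ring
  · show c cc - a cc = (1 : ℤ) * (y cc); rw [hy cc]; ring
  · show c cc - b cc = (1 : ℤ) * (y cc - x cc); rw [hx cc, hy cc]; ring
  · exact absurd rfl hik
  · show c cc - d cc = (-1 : ℤ) * (z cc - y cc); rw [hy cc, hz cc]; ring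
  · show d cc - a cc = (1 : ℤ) * (z cc); rw [hz cc]; ring
  · show d cc - b cc = (1 : ℤ) * (z cc - x cc); rw [hx cc, hz cc]; ring
  · show d cc - c cc = (1 : ℤ) * (z cc - y cc); rw [hy cc, hz cc]; ring
  · exact absurd rfl hik

lemma mkRel (a b c d x y z : V) (q : ℤ)
    (hx : ∀ cc, x cc = b cc - a cc) (hy : ∀ cc, y cc = c cc - a cc)
    (hz : ∀ cc, z cc = d cc - a cc)
    (i j k l : Fin 4) (hik : i ≠ k) (hjl : j ≠ l)
    (heq : ∀ cc, pp a b c d i cc + q * pp a b c d j cc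
      = pp a b c d k cc + q * pp a b c d l cc) :
    ∀ cc, Ev x y z (edgeIdx i k) cc
      = (sg i k * sg l j * q) * Ev x y z (edgeIdx j l) cc := by
  intro cc
  have e1 := EDGE a b c d x y z hx hy hz i k hik cc
  have e2 := EDGE a b c d x y z hx hy hz l j (Ne.symm hjl) cc
  rw [edgeSym l j] at e2
  have h3 : sg i k * Ev x y z (edgeIdx i k) cc
      = q * (sg l j * Ev x y z (edgeIdx j l) cc) := by
    linear_combination heq cc - e1 + q * e2
  have hs := sgsq i k
  linear_combination sg i k * h3 - Ev x y z (edgeIdx i k) cc * hs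

lemma pairNe (a b c d x y z : V) (q : ℤ) (hq : 2 ≤ q ∨ q ≤ -2)
    (hx : ∀ cc, x cc = b cc - a cc) (hy : ∀ cc, y cc = c cc - a cc)
    (hz : ∀ cc, z cc = d cc - a cc)
    (hdist : ∀ u v : Fin 4, u ≠ v → ¬(∀ cc, pp a b c d u cc = pp a b c d v cc))
    (Enz : ∀ γ : Fin 6, ¬(Ev x y z γ 0 = 0 ∧ Ev x y z γ 1 = 0))
    (i j k l i' j' k' l' : Fin 4)
    (hik : i ≠ k) (hjl : j ≠ l) (hik' : i' ≠ k') (hjl' : j' ≠ l')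
    (horder : 4*i.1+j.1 < 4*k.1+l.1) (horder' : 4*i'.1+j'.1 < 4*k'.1+l'.1)
    (hdiff : ¬(i = i' ∧ j = j' ∧ k = k' ∧ l = l'))
    (heq : ∀ cc, pp a b c d i cc + q * pp a b c d j cc
      = pp a b c d k cc + q * pp a b c d l cc)
    (heq' : ∀ cc, pp a b c d i' cc + q * pp a b c d j' cc
      = pp a b c d k' cc + q * pp a b c d l' cc) :
    ¬((edgeIdx i' k' = edgeIdx i k ∧ edgeIdx j' l' = edgeIdx j l) ∨
      (edgeIdx i' k' = edgeIdx j l ∧ edgeIdx j' l' = edgeIdx i k)) := by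
  have h2q : (2 : ℤ) * q ≠ 0 := by rcases hq with h | h <;> omega
  rintro (⟨hA, hB⟩ | ⟨hA, hB⟩)
  · rcases edgeInv i' k' i k hik' hik hA with ⟨rfl, rfl⟩ | ⟨rfl, rfl⟩ <;>
      rcases edgeInv j' l' j l hjl' hjl hB with ⟨rfl, rfl⟩ | ⟨rfl, rfl⟩
    · exact hdiff ⟨rfl, rfl, rfl, rfl⟩
    · -- j' = l, l' = j : cancel to get p j = p l
      apply hdist j l hjl
      intro cc
      have key : (2*q) * (pp a b c d j cc - pp a b c d l cc) = 0 := by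
        linear_combination heq cc - heq' cc
      have := mul_eq_zero.mp key
      rcases this with h | h
      · exact absurd h h2q
      · linarith
    · -- i' = k, k' = i
      apply hdist i k hik
      intro cc
      have key : (2 : ℤ) * (pp a b c d i cc - pp a b c d k cc) = 0 := by
        linear_combination heq cc - heq' cc
      have := mul_eq_zero.mp key
      rcases this with h | h
      · norm_num at h
      · linarith
    · omega
  · have R1 := mkRel a b c d x y z q hx hy hz i j k l hik hjl heq
    have R2 := mkRel a b c d x y z q hx hy hz i' j' k' l' hik' hjl' heq'
    rw [hA, hB] at R2
    have key : ∀ cc, (1 - (sg i k * sg l j * q) * (sg i' k' * sg l' j' * q))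
        * Ev x y z (edgeIdx i k) cc = 0 := fun cc => by
      linear_combination R1 cc + (sg i k * sg l j * q) * R2 cc
    have h0 := mulcancel (key 0) (key 1) (Enz _)
    exact N5 hq (sgq2 i k l j q) (sgq2 i' k' l' j' q) (by linarith)
lemma count (f : ℕ → V) : ∀ N : ℕ,
    N ≤ ((Finset.range N).image f).card +
      (((Finset.range N) ×ˢ (Finset.range N)).filter
        (fun uv => uv.1 < uv.2 ∧ f uv.1 = f uv.2)).card := by
  intro N
  induction N with
  | zero => simp
  | succ n ih =>
    rw [Finset.range_add_one, Finset.image_insert]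
    have hsub : ((Finset.range n) ×ˢ (Finset.range n)).filter
          (fun uv => uv.1 < uv.2 ∧ f uv.1 = f uv.2) ⊆
        ((insert n (Finset.range n)) ×ˢ (insert n (Finset.range n))).filter
          (fun uv => uv.1 < uv.2 ∧ f uv.1 = f uv.2) :=
      Finset.filter_subset_filter _
        (Finset.product_subset_product (Finset.subset_insert _ _) (Finset.subset_insert _ _))
    by_cases hmem : f n ∈ (Finset.range n).image f
    · obtain ⟨m, hm, hfm⟩ := Finset.mem_image.mp hmem
      have hmn : (m, n) ∈ ((insert n (Finset.range n)) ×ˢ (insert n (Finset.range n))).filter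
          (fun uv => uv.1 < uv.2 ∧ f uv.1 = f uv.2) :=
        Finset.mem_filter.mpr ⟨Finset.mem_product.mpr
          ⟨Finset.mem_insert_of_mem hm, Finset.mem_insert_self _ _⟩,
          Finset.mem_range.mp hm, hfm⟩
      have hnotin : (m, n) ∉ ((Finset.range n) ×ˢ (Finset.range n)).filter
          (fun uv => uv.1 < uv.2 ∧ f uv.1 = f uv.2) := by
        intro hcon
        have h2 := (Finset.mem_product.mp (Finset.mem_filter.mp hcon).1).2
        exact absurd (Finset.mem_range.mp h2) (lt_irrefl n)
      have hcard : (((Finset.range n) ×ˢ (Finset.range n)).filter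
            (fun uv => uv.1 < uv.2 ∧ f uv.1 = f uv.2)).card + 1 ≤
          (((insert n (Finset.range n)) ×ˢ (insert n (Finset.range n))).filter
            (fun uv => uv.1 < uv.2 ∧ f uv.1 = f uv.2)).card := by
        have h1 := Finset.card_le_card (Finset.insert_subset hmn hsub)
        rw [Finset.card_insert_of_notMem hnotin] at h1
        exact h1
      have himg := Finset.card_insert_of_mem hmem
      omega
    · rw [Finset.card_insert_of_notMem hmem]
      have := Finset.card_le_card hsub
      omega

lemma ratPar {x0 x1 y0 y1 : ℤ} (h : x0 * y1 - x1 * y0 = 0) (hx : ¬(x0 = 0 ∧ x1 = 0)) :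
    ∃ r : ℚ, (y0 : ℚ) = r * (x0 : ℚ) ∧ (y1 : ℚ) = r * (x1 : ℚ) := by
  by_cases h0 : x0 = 0
  · have h1 : x1 ≠ 0 := fun hh => hx ⟨h0, hh⟩
    have hz : x1 * y0 = 0 := by linear_combination -h + y1 * h0
    have hy0 : y0 = 0 := by
      rcases mul_eq_zero.mp hz with h' | h'
      · exact absurd h' h1
      · exact h'
    refine ⟨(y1 : ℚ) / (x1 : ℚ), ?_, ?_⟩
    · rw [hy0, h0]; simp
    · have hx1 : (x1 : ℚ) ≠ 0 := Int.cast_ne_zero.mpr h1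
      field_simp
  · refine ⟨(y0 : ℚ) / (x0 : ℚ), ?_, ?_⟩
    · have hx0 : (x0 : ℚ) ≠ 0 := Int.cast_ne_zero.mpr h0
      field_simp
    · have hx0 : (x0 : ℚ) ≠ 0 := Int.cast_ne_zero.mpr h0
      have hcast : (y1 : ℚ) * (x0 : ℚ) = (y0 : ℚ) * (x1 : ℚ) := by
        exact_mod_cast congrArg (fun t : ℤ => (t : ℚ)) (by linarith : y1 * x0 = y0 * x1)
      field_simp
      linarith [hcast]

lemma sub2ne {u v : V} (h : u ≠ v) (e0 : u 0 - v 0 = 0) (e1 : u 1 - v 1 = 0) : False :=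
  h (funext fun cc => by rcases finTwo cc with rfl | rfl <;> linarith)
def fin4 (n : ℕ) : Fin 4 := ⟨n % 4, Nat.mod_lt _ (by norm_num)⟩

def FF (a b c d : V) (q : ℤ) : ℕ → V := fun n cc =>
  pp a b c d (fin4 (n/4)) cc + q * pp a b c d (fin4 n) cc

lemma decode (a b c d : V) (q : ℤ) (hq0 : q ≠ 0)
    (hdist : ∀ u v : Fin 4, u ≠ v → ¬(∀ cc, pp a b c d u cc = pp a b c d v cc))
    (m n : ℕ) (hm : m < 16) (hn : n < 16) (hlt : m < n)
    (hfe : FF a b c d q m = FF a b c d q n) :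
    fin4 (m/4) ≠ fin4 (n/4) ∧ fin4 m ≠ fin4 n ∧
    (∀ cc, pp a b c d (fin4 (m/4)) cc + q * pp a b c d (fin4 m) cc
      = pp a b c d (fin4 (n/4)) cc + q * pp a b c d (fin4 n) cc) := by
  have heq : ∀ cc, pp a b c d (fin4 (m/4)) cc + q * pp a b c d (fin4 m) cc
      = pp a b c d (fin4 (n/4)) cc + q * pp a b c d (fin4 n) cc :=
    fun cc => congrFun hfe cc
  have hik : fin4 (m/4) ≠ fin4 (n/4) := by
    intro hik
    by_cases hjl : fin4 m = fin4 n
    · have h1 : m/4 % 4 = n/4 % 4 := congrArg Fin.val hik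
      have h2 : m % 4 = n % 4 := congrArg Fin.val hjl
      omega
    · apply hdist _ _ hjl
      intro cc
      have hcc := heq cc
      rw [hik] at hcc
      have key : q * (pp a b c d (fin4 m) cc - pp a b c d (fin4 n) cc) = 0 := by
        linear_combination hcc
      rcases mul_eq_zero.mp key with h | h
      · exact absurd h hq0
      · linarith
  refine ⟨hik, ?_, heq⟩
  intro hjl
  apply hdist _ _ hik
  intro cc
  have hcc := heq cc
  rw [hjl] at hcc
  linarith [hcc]

end FP

theorem four_point_bound (q : ℤ) (hq : 1 < |q|)
    (A' : Finset (Fin 2 → ℤ)) (hrk : rk A' = 2) (hcard : A'.card = 4) :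
    14 ≤ (A' + dil q A').card := by
  classical
  have hq2 : 2 ≤ q ∨ q ≤ -2 := by rcases abs_cases q with ⟨h1, h2⟩ | ⟨h1, h2⟩ <;> omega
  have hq0 : q ≠ 0 := by rcases hq2 with h | h <;> omega
  obtain ⟨a, t3, hat, hins, hc3⟩ := Finset.card_eq_succ.mp (show A'.card = 3 + 1 by omega)
  obtain ⟨b, c, d, hbc, hbd, hcd, rfl⟩ := Finset.card_eq_three.mp hc3
  subst hins
  simp only [Finset.mem_insert, Finset.mem_singleton] at hat
  push_neg at hat
  obtain ⟨hab, hac, had⟩ := hat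
  set x : FP.V := fun cc => b cc - a cc with hxd
  set y : FP.V := fun cc => c cc - a cc with hyd
  set z : FP.V := fun cc => d cc - a cc with hzd
  have hx : ∀ cc, x cc = b cc - a cc := fun _ => rfl
  have hy : ∀ cc, y cc = c cc - a cc := fun _ => rfl
  have hz : ∀ cc, z cc = d cc - a cc := fun _ => rfl
  have hdist : ∀ u v : Fin 4, u ≠ v → ¬(∀ cc, FP.pp a b c d u cc = FP.pp a b c d v cc) := by
    intro u v huv hall
    have heq : FP.pp a b c d u = FP.pp a b c d v := funext hall
    rcases FP.finFour u with rfl|rfl|rfl|rfl <;> rcases FP.finFour v with rfl|rfl|rfl|rfl <;>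
      first
        | exact huv rfl
        | exact hab heq | exact hab heq.symm
        | exact hac heq | exact hac heq.symm
        | exact had heq | exact had heq.symm
        | exact hbc heq | exact hbc heq.symm
        | exact hbd heq | exact hbd heq.symm
        | exact hcd heq | exact hcd heq.symm
  have Enz : ∀ γ : Fin 6, ¬(FP.Ev x y z γ 0 = 0 ∧ FP.Ev x y z γ 1 = 0) := by
    rintro γ ⟨e0, e1⟩
    rcases FP.finSix γ with rfl|rfl|rfl|rfl|rfl|rfl
    · exact FP.sub2ne (Ne.symm hab) e0 e1
    · exact FP.sub2ne (Ne.symm hac) e0 e1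
    · exact FP.sub2ne (Ne.symm had) e0 e1
    · simp only [FP.Ev] at e0 e1
      rw [hx 0, hy 0] at e0; rw [hx 1, hy 1] at e1
      exact FP.sub2ne (Ne.symm hbc) (by linarith) (by linarith)
    · simp only [FP.Ev] at e0 e1
      rw [hx 0, hz 0] at e0; rw [hx 1, hz 1] at e1
      exact FP.sub2ne (Ne.symm hbd) (by linarith) (by linarith)
    · simp only [FP.Ev] at e0 e1
      rw [hy 0, hz 0] at e0; rw [hy 1, hz 1] at e1
      exact FP.sub2ne (Ne.symm hcd) (by linarith) (by linarith)
  have hnx : ¬(x 0 = 0 ∧ x 1 = 0) := Enz 0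
  have hdet : ¬((x 0 * y 1 - x 1 * y 0 = 0) ∧ (x 0 * z 1 - x 1 * z 0 = 0)
      ∧ (y 0 * z 1 - y 1 * z 0 = 0)) := by
    rintro ⟨e1, e2, _⟩
    set w : Fin 2 → ℚ := fun cc => (b cc : ℚ) - (a cc : ℚ) with hwd
    have hw : w ≠ 0 := by
      intro h0
      apply hab
      funext cc
      have hcc : w cc = 0 := by rw [h0]; rfl
      have h2 : (a cc : ℚ) = (b cc : ℚ) := by
        rw [hwd] at hcc
        simp only at hcc
        linarith
      exact_mod_cast h2
    have hwcc : ∀ cc, w cc = (b cc : ℚ) - (a cc : ℚ) := fun _ => rfl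
    have hx' : ∀ c2 : Fin 2, ((x c2 : ℤ) : ℚ) = (b c2 : ℚ) - (a c2 : ℚ) := fun c2 => by
      rw [hx c2]; push_cast; ring
    have hy' : ∀ c2 : Fin 2, ((y c2 : ℤ) : ℚ) = (c c2 : ℚ) - (a c2 : ℚ) := fun c2 => by
      rw [hy c2]; push_cast; ring
    have hz' : ∀ c2 : Fin 2, ((z c2 : ℤ) : ℚ) = (d c2 : ℚ) - (a c2 : ℚ) := fun c2 => by
      rw [hz c2]; push_cast; ring
    have hr : ∀ u0 ∈ (insert a {b, c, d} : Finset (Fin 2 → ℤ)), ∃ r : ℚ,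
        ∀ cc, (u0 cc : ℚ) - (a cc : ℚ) = r * w cc := by
      intro u0 hu0
      simp only [Finset.mem_insert, Finset.mem_singleton] at hu0
      rcases hu0 with h | h | h | h
      · exact ⟨0, fun cc => by rw [h]; simp⟩
      · exact ⟨1, fun cc => by rw [h, hwcc cc]; ring⟩
      · obtain ⟨r, h0, h1⟩ := FP.ratPar e1 hnx
        rw [hy' 0, hx' 0] at h0
        rw [hy' 1, hx' 1] at h1
        refine ⟨r, fun cc => ?_⟩
        rw [h]
        rcases FP.finTwo cc with rfl | rfl
        · rw [hwcc 0]; linarith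
        · rw [hwcc 1]; linarith
      · obtain ⟨r, h0, h1⟩ := FP.ratPar e2 hnx
        rw [hz' 0, hx' 0] at h0
        rw [hz' 1, hx' 1] at h1
        refine ⟨r, fun cc => ?_⟩
        rw [h]
        rcases FP.finTwo cc with rfl | rfl
        · rw [hwcc 0]; linarith
        · rw [hwcc 1]; linarith
    have hspan : vectorSpan ℚ ((fun v : Fin 2 → ℤ => fun i : Fin 2 => (v i : ℚ)) ''
        ((insert a {b, c, d} : Finset (Fin 2 → ℤ)) : Set (Fin 2 → ℤ))) ≤ ℚ ∙ w := by
      rw [vectorSpan_def, Submodule.span_le]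
      intro el hel
      rw [Set.mem_vsub] at hel
      obtain ⟨u', hu', v', hv', rfl⟩ := hel
      obtain ⟨u, hu, rfl⟩ := hu'
      obtain ⟨v, hv, rfl⟩ := hv'
      rw [SetLike.mem_coe, Submodule.mem_span_singleton]
      obtain ⟨r1, hr1⟩ := hr u (by exact_mod_cast hu)
      obtain ⟨r2, hr2⟩ := hr v (by exact_mod_cast hv)
      refine ⟨r1 - r2, ?_⟩
      funext cc
      have h1 := hr1 cc
      have h2 := hr2 cc
      show (r1 - r2) * w cc = (u cc : ℚ) - (v cc : ℚ)
      linarith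
    have hfin := Submodule.finrank_mono hspan
    have hone : Module.finrank ℚ ↥(ℚ ∙ w) = 1 := finrank_span_singleton hw
    rw [hone] at hfin
    have hrk2 : Module.finrank ℚ ↥(vectorSpan ℚ ((fun v : Fin 2 → ℤ => fun i : Fin 2 => (v i : ℚ)) ''
        ((insert a {b, c, d} : Finset (Fin 2 → ℤ)) : Set (Fin 2 → ℤ)))) = 2 := hrk
    rw [hrk2] at hfin
    exact absurd hfin (by norm_num)
  -- counting
  have himg : (Finset.range 16).image (FP.FF a b c d q) ⊆
      (insert a {b, c, d} : Finset (Fin 2 → ℤ)) + dil q (insert a {b, c, d}) := by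
    intro v hv
    obtain ⟨n, _, rfl⟩ := Finset.mem_image.mp hv
    rw [Finset.mem_add]
    have hmemA : ∀ u : Fin 4, FP.pp a b c d u ∈ (insert a {b, c, d} : Finset (Fin 2 → ℤ)) := by
      intro u
      rcases FP.finFour u with rfl|rfl|rfl|rfl
      · show a ∈ _; simp
      · show b ∈ _; simp
      · show c ∈ _; simp
      · show d ∈ _; simp
    refine ⟨FP.pp a b c d (FP.fin4 (n/4)), hmemA _,
      q • FP.pp a b c d (FP.fin4 n), ?_, ?_⟩
    · show _ ∈ (insert a {b, c, d} : Finset (Fin 2 → ℤ)).image (fun v => q • v)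
      exact Finset.mem_image.mpr ⟨_, hmemA _, rfl⟩
    · funext cc
      show FP.pp a b c d (FP.fin4 (n/4)) cc + q * FP.pp a b c d (FP.fin4 n) cc
        = FP.FF a b c d q n cc
      rfl
  have hcnt := FP.count (FP.FF a b c d q) 16
  have hC2 : (((Finset.range 16) ×ˢ (Finset.range 16)).filter
      (fun uv => uv.1 < uv.2 ∧ FP.FF a b c d q uv.1 = FP.FF a b c d q uv.2)).card ≤ 2 := by
    by_contra hC
    push_neg at hC
    rw [Finset.two_lt_card_iff] at hC
    obtain ⟨u1, u2, u3, hu1, hu2, hu3, h12, h13, h23⟩ := hC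
    obtain ⟨m1, n1⟩ := u1
    obtain ⟨m2, n2⟩ := u2
    obtain ⟨m3, n3⟩ := u3
    rw [Finset.mem_filter, Finset.mem_product] at hu1 hu2 hu3
    obtain ⟨⟨hm1r, hn1r⟩, hlt1, hfe1⟩ := hu1
    obtain ⟨⟨hm2r, hn2r⟩, hlt2, hfe2⟩ := hu2
    obtain ⟨⟨hm3r, hn3r⟩, hlt3, hfe3⟩ := hu3
    rw [Finset.mem_range] at hm1r hn1r hm2r hn2r hm3r hn3r
    simp only at hlt1 hlt2 hlt3 hfe1 hfe2 hfe3
    obtain ⟨hik1, hjl1, heq1⟩ := FP.decode a b c d q hq0 hdist m1 n1 hm1r hn1r hlt1 hfe1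
    obtain ⟨hik2, hjl2, heq2⟩ := FP.decode a b c d q hq0 hdist m2 n2 hm2r hn2r hlt2 hfe2
    obtain ⟨hik3, hjl3, heq3⟩ := FP.decode a b c d q hq0 hdist m3 n3 hm3r hn3r hlt3 hfe3
    have R1 := FP.mkRel a b c d x y z q hx hy hz _ _ _ _ hik1 hjl1 heq1
    have R2 := FP.mkRel a b c d x y z q hx hy hz _ _ _ _ hik2 hjl2 heq2
    have R3 := FP.mkRel a b c d x y z q hx hy hz _ _ _ _ hik3 hjl3 heq3
    have hor1 : 4*(FP.fin4 (m1/4)).1+(FP.fin4 m1).1 < 4*(FP.fin4 (n1/4)).1+(FP.fin4 n1).1 := by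
      show 4*(m1/4 % 4) + m1 % 4 < 4*(n1/4 % 4) + n1 % 4
      omega
    have hor2 : 4*(FP.fin4 (m2/4)).1+(FP.fin4 m2).1 < 4*(FP.fin4 (n2/4)).1+(FP.fin4 n2).1 := by
      show 4*(m2/4 % 4) + m2 % 4 < 4*(n2/4 % 4) + n2 % 4
      omega
    have hor3 : 4*(FP.fin4 (m3/4)).1+(FP.fin4 m3).1 < 4*(FP.fin4 (n3/4)).1+(FP.fin4 n3).1 := by
      show 4*(m3/4 % 4) + m3 % 4 < 4*(n3/4 % 4) + n3 % 4
      omega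
    have hdiff12 : ¬(FP.fin4 (m1/4) = FP.fin4 (m2/4) ∧ FP.fin4 m1 = FP.fin4 m2 ∧
        FP.fin4 (n1/4) = FP.fin4 (n2/4) ∧ FP.fin4 n1 = FP.fin4 n2) := by
      rintro ⟨e1, e2, e3, e4⟩
      apply h12
      have v1 : m1/4 % 4 = m2/4 % 4 := congrArg Fin.val e1
      have v2 : m1 % 4 = m2 % 4 := congrArg Fin.val e2
      have v3 : n1/4 % 4 = n2/4 % 4 := congrArg Fin.val e3
      have v4 : n1 % 4 = n2 % 4 := congrArg Fin.val e4
      have : m1 = m2 := by omega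
      have : n1 = n2 := by omega
      simp_all
    have hdiff13 : ¬(FP.fin4 (m1/4) = FP.fin4 (m3/4) ∧ FP.fin4 m1 = FP.fin4 m3 ∧
        FP.fin4 (n1/4) = FP.fin4 (n3/4) ∧ FP.fin4 n1 = FP.fin4 n3) := by
      rintro ⟨e1, e2, e3, e4⟩
      apply h13
      have v1 : m1/4 % 4 = m3/4 % 4 := congrArg Fin.val e1
      have v2 : m1 % 4 = m3 % 4 := congrArg Fin.val e2
      have v3 : n1/4 % 4 = n3/4 % 4 := congrArg Fin.val e3
      have v4 : n1 % 4 = n3 % 4 := congrArg Fin.val e4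
      have : m1 = m3 := by omega
      have : n1 = n3 := by omega
      simp_all
    have hdiff23 : ¬(FP.fin4 (m2/4) = FP.fin4 (m3/4) ∧ FP.fin4 m2 = FP.fin4 m3 ∧
        FP.fin4 (n2/4) = FP.fin4 (n3/4) ∧ FP.fin4 n2 = FP.fin4 n3) := by
      rintro ⟨e1, e2, e3, e4⟩
      apply h23
      have v1 : m2/4 % 4 = m3/4 % 4 := congrArg Fin.val e1
      have v2 : m2 % 4 = m3 % 4 := congrArg Fin.val e2
      have v3 : n2/4 % 4 = n3/4 % 4 := congrArg Fin.val e3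
      have v4 : n2 % 4 = n3 % 4 := congrArg Fin.val e4
      have : m2 = m3 := by omega
      have : n2 = n3 := by omega
      simp_all
    have p12 := FP.pairNe a b c d x y z q hq2 hx hy hz hdist Enz _ _ _ _ _ _ _ _
      hik1 hjl1 hik2 hjl2 hor1 hor2 hdiff12 heq1 heq2
    have p13 := FP.pairNe a b c d x y z q hq2 hx hy hz hdist Enz _ _ _ _ _ _ _ _
      hik1 hjl1 hik3 hjl3 hor1 hor3 hdiff13 heq1 heq3
    have p23 := FP.pairNe a b c d x y z q hq2 hx hy hz hdist Enz _ _ _ _ _ _ _ _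
      hik2 hjl2 hik3 hjl3 hor2 hor3 hdiff23 heq2 heq3
    exact FP.core x y z q _ _ _ hq2
      (FP.sgq2 _ _ _ _ q) (FP.sgq2 _ _ _ _ q) (FP.sgq2 _ _ _ _ q) Enz hdet
      _ _ _ _ _ _ R1 R2 R3 p12 p13 p23
  have himgcard := Finset.card_le_card himg
  omega
end

section
/- Let d ≥ 1, q an integer with |q| > 1, and A ⊆ Z^d finite of rank d. Write A as a disjoint union of nonempty sets A_i = a_i + q·A'_i for i = 1, ..., r, where a_i ∈ {0, ..., |q|-1}^d are the distinct residues of A modulo q·Z^d. Suppose A is reduced, i.e., for every a ∈ A, the set A - a generates Z^d. Fix 1 ≤ i ≤ r. If |A_i + q·A| < |A_i + q·A_i| + min_{1≤w≤r} |A_w|, then A'_i intersects every coset of q·Z^d (i.e., A'_i is fully distributed modulo q·Z^d). -/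
open Pointwise

/-- Componentwise reduction mod `n` as an additive hom. -/
def resHom (d n : ℕ) : (Fin d → ℤ) →+ (Fin d → ZMod n) where
  toFun x := fun j => (x j : ZMod n)
  map_zero' := by funext j; simp
  map_add' x y := by funext j; push_cast; simp

lemma resHom_surj (d n : ℕ) : Function.Surjective (resHom d n) := by
  intro v
  refine ⟨fun j => Classical.choose (ZMod.intCast_surjective (v j)), funext fun j => ?_⟩
  exact Classical.choose_spec (ZMod.intCast_surjective (v j))

lemma resHom_qsmul (d : ℕ) (q : ℤ) (y : Fin d → ℤ) :
    resHom d q.natAbs (q • y) = 0 := by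
  funext j
  show ((q * y j : ℤ) : ZMod q.natAbs) = 0
  have hq : ((q : ℤ) : ZMod q.natAbs) = 0 := by
    rw [ZMod.intCast_zmod_eq_zero_iff_dvd]
    exact Int.natAbs_dvd.mpr dvd_rfl
  push_cast
  rw [hq, zero_mul]

lemma sing_add_eq_image {G : Type*} [AddCommGroup G] [DecidableEq G] (b : G) (S : Finset G) :
    {b} + S = S.image (fun x => b + x) := by
  ext z
  simp only [Finset.mem_add, Finset.mem_image, Finset.mem_singleton]
  constructor
  · rintro ⟨y, rfl, w, hw, rfl⟩; exact ⟨w, hw, rfl⟩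
  · rintro ⟨w, hw, rfl⟩; exact ⟨b, rfl, w, hw, rfl⟩

lemma card_sing_add {G : Type*} [AddCommGroup G] [DecidableEq G] (b : G) (S : Finset G) :
    ({b} + S).card = S.card := by
  rw [sing_add_eq_image, Finset.card_image_of_injective _ (add_right_injective b)]

lemma card_add_sing {G : Type*} [AddCommGroup G] [DecidableEq G] (b : G) (S : Finset G) :
    (S + {b}).card = S.card := by
  rw [add_comm S ({b} : Finset G), card_sing_add]

/-- The stabilizer of a finset under right translation. -/
def stabSub {G : Type*} [AddCommGroup G] [DecidableEq G] (S : Finset G) : AddSubgroup G where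
  carrier := {g | S + {g} = S}
  zero_mem' := by
    show S + ({0} : Finset G) = S
    ext z; simp [Finset.mem_add]
  add_mem' := by
    intro g h (hg : S + {g} = S) (hh : S + {h} = S)
    show S + {g + h} = S
    rw [← Finset.singleton_add_singleton, ← add_assoc, hg, hh]
  neg_mem' := by
    intro g (hg : S + {g} = S)
    show S + {-g} = S
    have : (S + {g}) + {-g} = S := by
      rw [add_assoc, Finset.singleton_add_singleton, add_neg_cancel]
      ext z; simp [Finset.mem_add]
    rw [hg] at this
    exact this

theorem fully_distributed_or_increment {d : ℕ} (hd : 1 ≤ d) (q : ℤ) (hq : 1 < |q|)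
    (A : Finset (Fin d → ℤ)) (hrk : rk A = d) (hred : Reduced A)
    (r : ℕ) (a : Fin r → (Fin d → ℤ)) (ha : ∀ i j, 0 ≤ a i j ∧ a i j < |q|)
    (hainj : Function.Injective a)
    (A' : Fin r → Finset (Fin d → ℤ)) (hne : ∀ i, (A' i).Nonempty)
    (hA : A = Finset.univ.biUnion (fun i => {a i} + dil q (A' i)))
    (hdisj : ∀ i j, i ≠ j → Disjoint ({a i} + dil q (A' i)) ({a j} + dil q (A' j)))
    (i : Fin r)
    (hsmall : ((({a i} + dil q (A' i)) + dil q A).card : ℤ) <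
      (({a i} + dil q (A' i)) + dil q ({a i} + dil q (A' i))).card +
        Finset.univ.inf' ⟨i, Finset.mem_univ i⟩ (fun w => (({a w} + dil q (A' w)).card : ℤ))) :
    ∀ v : Fin d → ZMod q.natAbs, ∃ x ∈ A' i, (fun j => ((x j : ZMod q.natAbs))) = v := by
  classical
  have hq0 : q ≠ 0 := by
    intro h; rw [h] at hq; simp at hq
  set n := q.natAbs with hn
  set π := resHom d n with hπ
  have hπq : ∀ y : Fin d → ℤ, π (q • y) = 0 := fun y => resHom_qsmul d q y
  have hsmulinj : Function.Injective (fun y : Fin d → ℤ => q • y) :=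
    smul_right_injective _ hq0
  -- subset facts
  have hAsub : ∀ w, {a w} + dil q (A' w) ⊆ A := by
    intro w
    rw [hA]
    exact Finset.subset_biUnion_of_mem (fun w => {a w} + dil q (A' w)) (Finset.mem_univ w)
  -- cardinality of translate-dilate
  have card_sd : ∀ (b : Fin d → ℤ) (X : Finset (Fin d → ℤ)),
      ({b} + dil q X).card = X.card := by
    intro b X
    rw [card_sing_add, dil, Finset.card_image_of_injective _ hsmulinj]
  -- residues of A' i
  set S : Finset (Fin d → ZMod n) := (A' i).image π with hS
  -- Step A: key claim
  have key : ∀ w : Fin r, ∀ x ∈ A' i, π (x + a w) ∈ S + {π (a i)} := by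
    intro w x hx
    by_contra hmem
    set V : Finset (Fin d → ℤ) := {x + a w} + dil q (A' w) with hV
    set T : Finset (Fin d → ℤ) := {a i} + dil q V with hT
    set D := ({a i} + dil q (A' i)) + dil q ({a i} + dil q (A' i)) with hD
    have hTsub : T ⊆ ({a i} + dil q (A' i)) + dil q A := by
      intro z hz
      obtain ⟨s, hs, t, ht, rfl⟩ := Finset.mem_add.mp hz
      rw [Finset.mem_singleton] at hs; subst hs
      obtain ⟨u, hu, rfl⟩ := Finset.mem_image.mp ht
      obtain ⟨s', hs', t', ht', rfl⟩ := Finset.mem_add.mp hu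
      rw [Finset.mem_singleton] at hs'; subst hs'
      obtain ⟨y, hy, rfl⟩ := Finset.mem_image.mp ht'
      have heq : a i + q • (x + a w + q • y) =
          (a i + q • x) + q • (a w + q • y) := by
        simp only [smul_add]; abel
      rw [heq]
      refine Finset.add_mem_add ?_ ?_
      · exact Finset.add_mem_add (Finset.mem_singleton_self _)
          (Finset.mem_image_of_mem _ hx)
      · refine Finset.mem_image_of_mem _ (hAsub w ?_)
        exact Finset.add_mem_add (Finset.mem_singleton_self _)
          (Finset.mem_image_of_mem _ hy)
    have hDsub : D ⊆ ({a i} + dil q (A' i)) + dil q A := by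
      apply Finset.add_subset_add_left
      exact Finset.image_subset_image (hAsub i)
    have hdisjDT : Disjoint D T := by
      rw [Finset.disjoint_left]
      intro z hzD hzT
      obtain ⟨s, hs, t, ht, rfl⟩ := Finset.mem_add.mp hzD
      obtain ⟨s1, hs1, t1, ht1, rfl⟩ := Finset.mem_add.mp hs
      rw [Finset.mem_singleton] at hs1; subst hs1
      obtain ⟨x', hx', rfl⟩ := Finset.mem_image.mp ht1
      obtain ⟨u, hu, rfl⟩ := Finset.mem_image.mp ht
      obtain ⟨s2, hs2, t2, ht2, rfl⟩ := Finset.mem_add.mp hu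
      rw [Finset.mem_singleton] at hs2; subst hs2
      obtain ⟨y', hy', rfl⟩ := Finset.mem_image.mp ht2
      -- z = a i + q • x' + q • (a i + q • y')
      obtain ⟨s3, hs3, t3, ht3, hz3⟩ := Finset.mem_add.mp hzT
      rw [Finset.mem_singleton] at hs3; subst hs3
      obtain ⟨u3, hu3, rfl⟩ := Finset.mem_image.mp ht3
      obtain ⟨s4, hs4, t4, ht4, rfl⟩ := Finset.mem_add.mp hu3
      rw [Finset.mem_singleton] at hs4; subst hs4
      obtain ⟨y, hy, rfl⟩ := Finset.mem_image.mp ht4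
      -- a i + q • x' + q • (a i + q • y') = a i + q • (x + a w + q • y)
      have e1 : a i + q • (x' + (a i + q • y')) =
          a i + q • x' + q • (a i + q • y') := by
        simp only [smul_add]; abel
      have h1 : a i + q • (x' + (a i + q • y')) = a i + q • (x + a w + q • y) :=
        e1.trans hz3.symm
      have h2 : x' + (a i + q • y') = x + a w + q • y :=
        hsmulinj (add_left_cancel h1)
      have h3 : π (x' + (a i + q • y')) = π (x + a w + q • y) := by rw [h2]
      rw [map_add, map_add, hπq, map_add, hπq, add_zero, add_zero] at h3
      apply hmem
      rw [← h3]
      exact Finset.add_mem_add (Finset.mem_image_of_mem _ hx')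
        (Finset.mem_singleton_self _)
    -- cardinality contradiction
    have hcardT : T.card = (A' w).card := by
      rw [hT, card_sd, hV, card_sd]
    have h1 : D.card + T.card ≤ (({a i} + dil q (A' i)) + dil q A).card := by
      rw [← Finset.card_union_of_disjoint hdisjDT]
      exact Finset.card_le_card (Finset.union_subset hDsub hTsub)
    have h2 : Finset.univ.inf' ⟨i, Finset.mem_univ i⟩
        (fun w => (({a w} + dil q (A' w)).card : ℤ)) ≤
        (({a w} + dil q (A' w)).card : ℤ) :=
      Finset.inf'_le _ (Finset.mem_univ w)
    rw [card_sd] at h2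
    have h1' : (D.card : ℤ) + (A' w).card ≤
        ((({a i} + dil q (A' i)) + dil q A).card : ℤ) := by
      rw [← hcardT]; exact_mod_cast h1
    rw [hD] at h1'
    omega
  -- Step B: translates of S agree
  have hScard : ∀ g : Fin d → ZMod n, (S + ({g} : Finset _)).card = S.card := by
    intro g
    rw [card_add_sing]
  have hSw : ∀ w, S + ({π (a w)} : Finset _) = S + {π (a i)} := by
    intro w
    apply Finset.eq_of_subset_of_card_le
    · intro z hz
      obtain ⟨s, hs, g, hg, rfl⟩ := Finset.mem_add.mp hz
      rw [Finset.mem_singleton] at hg; subst hg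
      obtain ⟨x, hx, rfl⟩ := Finset.mem_image.mp hs
      rw [← map_add]
      exact key w x hx
    · rw [hScard, hScard]
  -- residues of elements of A
  have hres : ∀ b ∈ A, ∃ w, π b = π (a w) := by
    intro b hb
    rw [hA] at hb
    obtain ⟨w, -, hw⟩ := Finset.mem_biUnion.mp hb
    obtain ⟨s, hs, t, ht, rfl⟩ := Finset.mem_add.mp hw
    rw [Finset.mem_singleton] at hs; subst hs
    obtain ⟨y, hy, rfl⟩ := Finset.mem_image.mp ht
    exact ⟨w, by rw [map_add, hπq, add_zero]⟩
  -- stabilizer contains all generators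
  have hgen : ∀ b ∈ A, π b - π (a i) ∈ stabSub S := by
    intro b hb
    obtain ⟨w, hw⟩ := hres b hb
    show S + {π b - π (a i)} = S
    rw [hw, sub_eq_add_neg, ← Finset.singleton_add_singleton, ← add_assoc, hSw w,
      add_assoc, Finset.singleton_add_singleton, add_neg_cancel]
    ext z; simp [Finset.mem_add]
  -- base point in A' i
  obtain ⟨x₀, hx₀⟩ := hne i
  have ha₀A : a i + q • x₀ ∈ A :=
    hAsub i (Finset.add_mem_add (Finset.mem_singleton_self _)
      (Finset.mem_image_of_mem _ hx₀))
  have hπa₀ : π (a i + q • x₀) = π (a i) := by rw [map_add, hπq, add_zero]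
  -- closure argument
  have hstab : ∀ g : Fin d → ZMod n, g ∈ stabSub S := by
    have hcl := hred (a i + q • x₀) ha₀A
    have hmap : AddSubgroup.closure (π '' ((fun x => x - (a i + q • x₀)) ''
        (A : Set (Fin d → ℤ)))) = ⊤ := by
      rw [← AddMonoidHom.map_closure, hcl]
      exact AddSubgroup.map_top_of_surjective _ (resHom_surj d n)
    have hle : AddSubgroup.closure (π '' ((fun x => x - (a i + q • x₀)) ''
        (A : Set (Fin d → ℤ)))) ≤ stabSub S := by
      rw [AddSubgroup.closure_le]
      rintro g ⟨y, ⟨b, hb, rfl⟩, rfl⟩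
      have : π (b - (a i + q • x₀)) = π b - π (a i) := by
        rw [map_sub, hπa₀]
      rw [this]
      exact hgen b hb
    intro g
    exact hle (hmap ▸ AddSubgroup.mem_top g)
  -- conclude
  intro v
  have hv : v ∈ S := by
    have hst : S + {v - π x₀} = S := hstab (v - π x₀)
    have hmem2 : π x₀ + (v - π x₀) ∈ S + {v - π x₀} :=
      Finset.add_mem_add (Finset.mem_image_of_mem _ hx₀)
        (Finset.mem_singleton_self _)
    rw [hst] at hmem2
    simpa using hmem2
  obtain ⟨x, hx, hxv⟩ := Finset.mem_image.mp hv
  exact ⟨x, hx, hxv⟩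
end

section
/- Let d ≥ 2, q an integer with |q| > 1, and A ⊆ Z^d finite of rank d. Let B ⊆ A have rank f with 1 ≤ f < d. Then there exist elements x_1, ..., x_{d-f} ∈ A such that the sets B + q·B, B + q·x_1, ..., B + q·x_{d-f} are pairwise disjoint; consequently |B + q·A| ≥ |B + q·B| + (d - f)|B|. -/
open Pointwise

/-!
Project `ℚ^d` onto `ℚ^d ⧸ V`, where `V` is the direction of the affine span of `B`: the quotient
has dimension `d - f` and `B` collapses to a single point there. As `A` spans `ℚ^d` affinely, its
image has at least `d - f + 1` points, so `A` contains `x₁, …, x_{d-f}` with pairwise distinct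
images that differ from the image of `B`. A coincidence `b + q c = b' + q e` with `b, b' ∈ B`
projects to `q c = q e` in the torsion-free quotient, so `B + q·C` and `B + q·D` are disjoint
whenever `C` and `D` have disjoint images.
-/

open Module Finset

theorem finrank_vectorSpan_finset_le {K P V : Type*} [DivisionRing K] [AddCommGroup V] [Module K V]
    [AddTorsor V P] [DecidableEq P] (s : Finset P) :
    finrank K (vectorSpan K (s : Set P)) ≤ s.card - 1 := by
  rcases h : s.card with _ | n
  · rw [card_eq_zero.mp h, coe_empty, vectorSpan_empty, finrank_bot]
  · have := finrank_vectorSpan_image_finset_le K id s h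
    rwa [image_id, ← Nat.add_sub_cancel n 1] at this

theorem finrank_quotient_le_card_image_mkQ {K E : Type*} [DivisionRing K] [AddCommGroup E]
    [Module K E] (V : Submodule K E) [DecidableEq (E ⧸ V)] (s : Finset E)
    (hs : vectorSpan K (s : Set E) = ⊤) :
    finrank K (E ⧸ V) ≤ (s.image V.mkQ).card - 1 := by
  have hspan : vectorSpan K ((s.image V.mkQ : Finset (E ⧸ V)) : Set (E ⧸ V)) = ⊤ := by
    rw [coe_image, ← V.mkQ.coe_toAffineMap, ← AffineMap.map_vectorSpan, hs]
    simp
  have := finrank_vectorSpan_finset_le (K := K) (s.image V.mkQ)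
  rwa [hspan, finrank_top] at this

theorem Finset.exists_injective_comp_notMem_of_le_card_image {α β : Type*} [DecidableEq β]
    (φ : α → β) (A : Finset α) (S : Finset β) {n : ℕ} (hn : n ≤ (A.image φ).card - S.card) :
    ∃ x : Fin n → α, (∀ k, x k ∈ A) ∧ (∀ k, φ (x k) ∉ S) ∧ Function.Injective (φ ∘ x) := by
  set T := A.image φ \ S
  have hT : n ≤ T.card := hn.trans (le_card_sdiff S _)
  let y : Fin n → T := fun k => T.equivFin.symm (Fin.castLE hT k)
  have hy : ∀ k, ∃ a ∈ A, φ a = y k := fun k => mem_image.mp (mem_sdiff.mp (y k).2).1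
  choose x hxA hxy using hy
  refine ⟨x, hxA, fun k => ?_, fun k l hkl => ?_⟩
  · rw [hxy]; exact (mem_sdiff.mp (y k).2).2
  · have : y k = y l := Subtype.ext (by simpa [hxy] using hkl)
    simpa [y] using this

-- `B + C.image (q • ·)` rather than `B + q • C`: on `Finset G`, `q • C` is the `q`-fold sumset.
theorem Finset.disjoint_add_image_zsmul {G H : Type*} [AddCommGroup G]
    [AddCommGroup H] [IsAddTorsionFree H] [DecidableEq G] [DecidableEq H] (φ : G →+ H) {q : ℤ}
    (hq : q ≠ 0) {B C D : Finset G} (hB : ∀ b ∈ B, ∀ b' ∈ B, φ b = φ b')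
    (hCD : Disjoint (C.image φ) (D.image φ)) :
    Disjoint (B + C.image (q • ·)) (B + D.image (q • ·)) := by
  simp only [disjoint_left, mem_add, mem_image]
  rintro _ ⟨b, hb, _, ⟨c, hc, rfl⟩, rfl⟩ ⟨b', hb', _, ⟨e, he, rfl⟩, h⟩
  have : q • φ c = q • φ e := by
    have := congrArg φ h
    simp only [map_add, map_zsmul, hB b hb b' hb'] at this
    exact (add_left_cancel this).symm
  exact disjoint_left.mp hCD (mem_image_of_mem φ hc)
    (zsmul_right_injective hq this ▸ mem_image_of_mem φ he)

theorem Finset.card_add_add_mul_card_le {G : Type*} [Add G] [IsRightCancelAdd G] [DecidableEq G]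
    {A B C : Finset G} (hCA : C ⊆ A) {n : ℕ} (y : Fin n → G) (hyA : ∀ k, y k ∈ A)
    (hCy : ∀ k, Disjoint (B + C) (B + {y k}))
    (hy : Pairwise fun k l => Disjoint (B + {y k}) (B + {y l})) :
    (B + C).card + n * B.card ≤ (B + A).card := by
  have hsub : (B + C) ∪ univ.biUnion (fun k => B + {y k}) ⊆ B + A :=
    union_subset (add_subset_add_left hCA) <| biUnion_subset.mpr fun k _ =>
      add_subset_add_left (singleton_subset_iff.mpr (hyA k))
  calc (B + C).card + n * B.card
      = ((B + C) ∪ univ.biUnion (fun k => B + {y k})).card := by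
        rw [card_union_of_disjoint ((disjoint_biUnion_right _ _ _).mpr fun k _ => hCy k),
          card_biUnion fun k _ l _ hkl => hy hkl]
        simp
    _ ≤ (B + A).card := card_le_card hsub

theorem exists_disjoint_add_zsmul_translates {G E : Type*} [AddCommGroup G] [DecidableEq G]
    [AddCommGroup E] [Module ℚ E] [FiniteDimensional ℚ E] (ι : G →+ E) {q : ℤ} (hq : q ≠ 0)
    {A B : Finset G} (hA : vectorSpan ℚ (ι '' A) = ⊤) {n : ℕ}
    (hn : n ≤ finrank ℚ E - finrank ℚ (vectorSpan ℚ (ι '' B))) :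
    ∃ x : Fin n → G, (∀ k, x k ∈ A) ∧
      (∀ k, Disjoint (B + B.image (q • ·)) (B + {q • x k})) ∧
      Pairwise fun k l => Disjoint (B + {q • x k}) (B + {q • x l}) := by
  classical
  set V := vectorSpan ℚ (ι '' B)
  have : IsAddTorsionFree (E ⧸ V) := .of_module_rat _
  set φ : G →+ E ⧸ V := V.mkQ.toAddMonoidHom.comp ι
  have hφB : ∀ b ∈ B, ∀ b' ∈ B, φ b = φ b' := fun b hb b' hb' =>
    (Submodule.Quotient.eq V).mpr (vsub_mem_vectorSpan ℚ (Set.mem_image_of_mem ι hb)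
      (Set.mem_image_of_mem ι hb'))
  have hcard : n ≤ (A.image φ).card - (B.image φ).card := by
    have hdim := V.finrank_quotient_add_finrank
    have hA' := finrank_quotient_le_card_image_mkQ V (A.image ι) (by rwa [coe_image])
    have hB : (B.image φ).card ≤ 1 := card_le_one.mpr fun _ h _ h' => by
      obtain ⟨b, hb, rfl⟩ := mem_image.mp h
      obtain ⟨b', hb', rfl⟩ := mem_image.mp h'
      exact hφB b hb b' hb'
    rw [image_image] at hA'
    change _ ≤ (A.image φ).card - 1 at hA'
    omega
  obtain ⟨x, hxA, hxB, hx⟩ := exists_injective_comp_notMem_of_le_card_image φ A (B.image φ) hcard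
  have hsingle : ∀ k, ({q • x k} : Finset G) = ({x k} : Finset G).image (q • ·) := fun k =>
    (image_singleton _ _).symm
  refine ⟨x, hxA, fun k => ?_, fun k l hkl => ?_⟩
  · rw [hsingle]
    refine disjoint_add_image_zsmul φ hq hφB ?_
    rw [image_singleton, disjoint_singleton_right]
    exact hxB k
  · dsimp only
    rw [hsingle, hsingle]
    refine disjoint_add_image_zsmul φ hq hφB ?_
    rw [image_singleton, image_singleton, disjoint_singleton]
    exact hx.ne hkl

theorem lower_rank_subset_bound_general {d : ℕ} (q : ℤ) (hq : 1 < |q|)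
    (A : Finset (Fin d → ℤ)) (hrkA : rk A = d)
    (B : Finset (Fin d → ℤ)) (hBA : B ⊆ A)
    (f : ℕ) (hrkB : rk B = f) :
    ∃ x : Fin (d - f) → (Fin d → ℤ),
      (∀ k, x k ∈ A) ∧
      (∀ k, Disjoint (B + dil q B) (B + {q • x k})) ∧
      (∀ k l, k ≠ l → Disjoint (B + ({q • x k} : Finset (Fin d → ℤ))) (B + {q • x l})) ∧
      (B + dil q A).card ≥ (B + dil q B).card + (d - f) * B.card := by
  classical
  have hq0 : q ≠ 0 := by rintro rfl; simp at hq
  let ι : (Fin d → ℤ) →+ (Fin d → ℚ) := (Int.castAddHom ℚ).compLeft (Fin d)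
  have hA : vectorSpan ℚ (ι '' A) = ⊤ :=
    Submodule.eq_top_of_finrank_eq (by rw [finrank_fin_fun]; exact hrkA)
  obtain ⟨x, hxA, hxB, hx⟩ := exists_disjoint_add_zsmul_translates ι hq0 hA (B := B) (n := d - f)
    (by rw [finrank_fin_fun, ← hrkB]; rfl)
  refine ⟨x, hxA, hxB, fun k l hkl => hx hkl, ?_⟩
  exact card_add_add_mul_card_le (image_subset_image hBA) (fun k => q • x k)
    (fun k => mem_image_of_mem _ (hxA k)) hxB hx

theorem lower_rank_subset_bound {d : ℕ} (hd : 2 ≤ d) (q : ℤ) (hq : 1 < |q|)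
    (A : Finset (Fin d → ℤ)) (hrkA : rk A = d)
    (B : Finset (Fin d → ℤ)) (hBA : B ⊆ A)
    (f : ℕ) (hrkB : rk B = f) (hf : 1 ≤ f) (hfd : f < d) :
    ∃ x : Fin (d - f) → (Fin d → ℤ),
      (∀ k, x k ∈ A) ∧
      (∀ k, Disjoint (B + dil q B) (B + {q • x k})) ∧
      (∀ k l, k ≠ l → Disjoint (B + ({q • x k} : Finset (Fin d → ℤ))) (B + {q • x l})) ∧
      (B + dil q A).card ≥ (B + dil q B).card + (d - f) * B.card :=
  lower_rank_subset_bound_general q hq A hrkA B hBA f hrkB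
end

section
/- Let d ≥ 1 and let A ⊆ Z^d be finite of rank d. Then the iterated reduction process terminates: there exists a finite A* ⊆ Z^d of rank d with |A*| = |A| and |A* + q·A*| = |A + q·A| for every integer q, such that for every a ∈ A*, the set A* - a generates Z^d as a group. -/
open Pointwise

/-!
Fix `a ∈ A` and let `V = ⟨A - a⟩_ℤ`. A ℤ-basis of `V` stays linearly independent over `ℚ` and
spans the rational span of `A - a`, so `rk A` is the ℤ-rank of `V`; hence `V` has rank `d` and
is the image of an injective linear map `L : ℤ^d → ℤ^d`. The set `A* = L⁻¹(A - a)` is then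
reached in a single reduction step: translations and injective linear maps preserve `|A|` and
`|A + q·A|`, and the differences of `A*` generate `L⁻¹ V = ℤ^d`.
-/

section Sumset

/- The dilate is written `B.image (q • ·)`: for finsets, `q • B` would be the `q`-fold sumset. -/

variable {G H : Type*} [AddCommGroup G] [AddCommGroup H] [DecidableEq G] [DecidableEq H]

theorem card_image_add_zsmul_image {f : G →+ H} (hf : Function.Injective f) (B : Finset G)
    (q : ℤ) :
    (B.image f + (B.image f).image (q • ·)).card = (B + B.image (q • ·)).card := by
  have hcomm : (B.image f).image (q • ·) = (B.image (q • ·)).image f := by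
    simp only [Finset.image_image, Function.comp_def, map_zsmul]
  rw [hcomm, ← Finset.image_add, Finset.card_image_of_injective _ hf]

theorem card_vadd_add_zsmul_vadd (t : G) (B : Finset G) (q : ℤ) :
    ((t +ᵥ B) + (t +ᵥ B).image (q • ·)).card = (B + B.image (q • ·)).card := by
  have htrans : (t +ᵥ B) + (t +ᵥ B).image (q • ·) = ((1 + q) • t) +ᵥ (B + B.image (q • ·)) := by
    ext x
    simp only [Finset.mem_add, Finset.mem_vadd_finset, Finset.mem_image, vadd_eq_add]
    constructor
    · rintro ⟨_, ⟨y, hy, rfl⟩, _, ⟨_, ⟨z, hz, rfl⟩, rfl⟩, rfl⟩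
      exact ⟨_, ⟨y, hy, _, ⟨z, hz, rfl⟩, rfl⟩, by module⟩
    · rintro ⟨_, ⟨y, hy, _, ⟨z, hz, rfl⟩, rfl⟩, rfl⟩
      exact ⟨_, ⟨y, hy, rfl⟩, _, ⟨_, ⟨z, hz, rfl⟩, rfl⟩, by module⟩
  rw [htrans, Finset.card_vadd_finset]

end Sumset

section Rank

open Module Submodule

theorem finrank_span_rat_image {M V : Type*} [AddCommGroup M] [AddCommGroup V] [Module ℚ V]
    {f : M →ₗ[ℤ] V} (hf : Function.Injective f) (N : Submodule ℤ M) [Free ℤ N]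
    [Module.Finite ℤ N] : finrank ℚ (span ℚ (f '' N)) = finrank ℤ N := by
  let b := Free.chooseBasis ℤ N
  have hli : LinearIndependent ℚ (f ∘ N.subtype ∘ b) :=
    (LinearIndependent.iff_fractionRing ℤ ℚ).mp
      ((b.linearIndependent.map' N.subtype N.ker_subtype).map' f (LinearMap.ker_eq_bot.mpr hf))
  have hspan : span ℚ (f '' N) = span ℚ (Set.range (f ∘ N.subtype ∘ b)) := by
    have hN : (N : Set M) = span ℤ (Set.range (N.subtype ∘ b)) := by
      rw [Set.range_comp, ← map_span, b.span_eq, Submodule.map_top, N.range_subtype]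
    rw [hN, ← map_coe, map_span, ← Set.range_comp, span_span_of_tower]
  rw [hspan, finrank_span_eq_card hli, finrank_eq_card_chooseBasisIndex]

theorem span_vectorSpan_int {V : Type*} [AddCommGroup V] [Module ℚ V] (s : Set V) :
    span ℚ (vectorSpan ℤ s : Set V) = vectorSpan ℚ s := by
  rw [vectorSpan_def, vectorSpan_def, span_span_of_tower]

def castVec (d : ℕ) : (Fin d → ℤ) →ₗ[ℤ] (Fin d → ℚ) :=
  LinearMap.compLeft (Int.castAddHom ℚ).toIntLinearMap (Fin d)

theorem castVec_injective (d : ℕ) : Function.Injective (castVec d) :=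
  fun _ _ h => funext fun i => Int.cast_injective (congrFun h i)

theorem rk_eq_finrank_vectorSpan {d : ℕ} (A : Finset (Fin d → ℤ)) :
    rk A = finrank ℤ (vectorSpan ℤ (A : Set (Fin d → ℤ))) := by
  have himage : vectorSpan ℚ (castVec d '' A) =
      span ℚ (castVec d '' (vectorSpan ℤ (A : Set (Fin d → ℤ)) : Set (Fin d → ℤ))) := by
    have hmap := (castVec d).toAffineMap.map_vectorSpan (s := (A : Set (Fin d → ℤ)))
    rw [LinearMap.toAffineMap_linear, LinearMap.coe_toAffineMap] at hmap
    rw [← span_vectorSpan_int, ← hmap, map_coe]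
  rw [rk, ← finrank_span_rat_image (castVec_injective d)]
  exact congrArg (fun W : Submodule ℚ _ => finrank ℚ W) himage

end Rank

theorem reduced_of_vectorSpan_eq_top {d : ℕ} {A : Finset (Fin d → ℤ)}
    (h : vectorSpan ℤ (A : Set (Fin d → ℤ)) = ⊤) : Reduced A := by
  intro a ha
  rw [← Submodule.span_int_eq_addSubgroupClosure]
  simp only [← vsub_eq_sub, ← vectorSpan_eq_span_vsub_set_right ℤ (Finset.mem_coe.mpr ha), h,
    Submodule.top_toAddSubgroup]

theorem exists_injective_image_eq_vadd {d : ℕ} {A : Finset (Fin d → ℤ)} (hrk : rk A = d)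
    {a : Fin d → ℤ} (ha : a ∈ A) :
    ∃ (L : (Fin d → ℤ) →ₗ[ℤ] (Fin d → ℤ)) (B : Finset (Fin d → ℤ)), Function.Injective L ∧
      vectorSpan ℤ (B : Set (Fin d → ℤ)) = ⊤ ∧ B.image L = -a +ᵥ A := by
  set V := vectorSpan ℤ (A : Set (Fin d → ℤ))
  have hV : Module.finrank ℤ (Fin d → ℤ) = Module.finrank ℤ V := by
    rw [Module.finrank_fin_fun, ← rk_eq_finrank_vectorSpan, hrk]
  let L := V.subtype ∘ₗ (LinearEquiv.ofFinrankEq _ _ hV).toLinearMap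
  have hL : Function.Injective L := Subtype.val_injective.comp (LinearEquiv.injective _)
  have hrange : LinearMap.range L = V := by
    rw [LinearMap.range_comp, LinearEquiv.range, Submodule.map_top, Submodule.range_subtype]
  have hsub : ((-a +ᵥ A : Finset _) : Set (Fin d → ℤ)) ⊆ L '' Set.univ := by
    rintro _ hmem
    obtain ⟨x, hx, rfl⟩ := Finset.mem_vadd_finset.mp hmem
    rw [Set.image_univ, ← LinearMap.coe_range, hrange, vadd_eq_add, neg_add_eq_sub]
    exact vsub_mem_vectorSpan ℤ hx ha
  obtain ⟨B, -, hB⟩ := Finset.subset_set_image_iff.mp hsub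
  refine ⟨L, B, hL, Submodule.map_injective_of_injective hL ?_, hB⟩
  have hmap := L.toAffineMap.map_vectorSpan (s := (B : Set (Fin d → ℤ)))
  rw [LinearMap.toAffineMap_linear, LinearMap.coe_toAffineMap] at hmap
  rw [hmap, ← Finset.coe_image, hB, Finset.coe_vadd_finset, vectorSpan_vadd, Submodule.map_top,
    hrange]

theorem reduction_terminates_general {d : ℕ}
    (A : Finset (Fin d → ℤ)) (hrk : rk A = d) :
    ∃ Astar : Finset (Fin d → ℤ), rk Astar = d ∧ Astar.card = A.card ∧
      (∀ q : ℤ, (Astar + dil q Astar).card = (A + dil q A).card) ∧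
      Reduced Astar := by
  rcases A.eq_empty_or_nonempty with rfl | ⟨a, ha⟩
  · exact ⟨∅, hrk, rfl, fun _ => rfl, by simp [Reduced]⟩
  obtain ⟨L, B, hL, hB, hBA⟩ := exists_injective_image_eq_vadd hrk ha
  refine ⟨B, ?_, ?_, fun q => ?_, reduced_of_vectorSpan_eq_top hB⟩
  · rw [rk_eq_finrank_vectorSpan, hB, finrank_top, Module.finrank_fin_fun]
  · rw [← Finset.card_image_of_injective B hL, hBA, Finset.card_vadd_finset]
  · calc (B + dil q B).card = (B.image L + dil q (B.image L)).card :=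
          (card_image_add_zsmul_image (f := L.toAddMonoidHom) hL B q).symm
      _ = (A + dil q A).card := by rw [hBA]; exact card_vadd_add_zsmul_vadd _ _ _

theorem reduction_terminates {d : ℕ} (hd : 1 ≤ d)
    (A : Finset (Fin d → ℤ)) (hrk : rk A = d) :
    ∃ Astar : Finset (Fin d → ℤ), rk Astar = d ∧ Astar.card = A.card ∧
      (∀ q : ℤ, (Astar + dil q Astar).card = (A + dil q A).card) ∧
      Reduced Astar :=
  reduction_terminates_general A hrk
end
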